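/- arXiv:1610.01004 — 8 statements merged into one kernel-verified Lean document; each statement's English description precedes it below -/
import Mathlib

section
/- Let ha = h1 · o_t · g · o_{t'} · h2 be a well-formed, alternating, end-to-end opaque history in which every invocation has a matching response, where o_t and o_{t'} are completed operation calls (an invocation immediately followed by its matching response) of distinct transactions t ≠ t', and g contains no events of t and no events of t'. Then: (1) if o_t is not a TXBegin operation, the history h1 · g · o_{t'} · o_t · h2 is end-to-end opaque and equivalent (≡) to ha; and (2) if the response of o_{t'} is neither ret(TXCommit)_{t'} nor ret(TXAbort)_{t'}, the history h1 · o_{t'} · o_t · g · h2 is end-to-end opaque and equivalent (≡) to ha. -/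
namespace TM

/-- Events of a TM implementation: invocations and responses. -/
inductive Event (T A V : Type) where
  | invBegin  (t : T)
  | invCommit (t : T)
  | invRead   (t : T) (a : A)
  | invWrite  (t : T) (a : A) (v : V)
  | respBegin  (t : T)
  | respCommit (t : T)
  | respRead   (t : T) (v : V)
  | respWrite  (t : T)
  | respAbort  (t : T)
  deriving DecidableEq

namespace Event

/-- The transaction an event belongs to. -/
def tx {T A V : Type} : Event T A V → T
  | invBegin t => t
  | invCommit t => t
  | invRead t _ => t
  | invWrite t _ _ => t
  | respBegin t => t
  | respCommit t => t
  | respRead t _ => t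
  | respWrite t => t
  | respAbort t => t

/-- Is the event an invocation? -/
def isInv {T A V : Type} : Event T A V → Bool
  | invBegin _ => true
  | invCommit _ => true
  | invRead _ _ => true
  | invWrite _ _ _ => true
  | _ => false

/-- Is the event a response? -/
def isResp {T A V : Type} (e : Event T A V) : Bool := !e.isInv

end Event

/-- An invocation together with a matching response. -/
inductive Matches {T A V : Type} : Event T A V → Event T A V → Prop where
  | beginOk (t : T) : Matches (.invBegin t) (.respBegin t)
  | commitOk (t : T) : Matches (.invCommit t) (.respCommit t)
  | commitAbort (t : T) : Matches (.invCommit t) (.respAbort t)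
  | readOk (t : T) (a : A) (v : V) : Matches (.invRead t a) (.respRead t v)
  | readAbort (t : T) (a : A) : Matches (.invRead t a) (.respAbort t)
  | writeOk (t : T) (a : A) (v : V) : Matches (.invWrite t a v) (.respWrite t)
  | writeAbort (t : T) (a : A) (v : V) : Matches (.invWrite t a v) (.respAbort t)

variable {T A V : Type}

section Histories
variable [DecidableEq T]

/-- `proj h t` is `h|t`, the subsequence of events of transaction `t`. -/
def proj (h : List (Event T A V)) (t : T) : List (Event T A V) :=
  h.filter (fun e => decide (e.tx = t))

/-- An alternating sequence of invocations and matching responses, beginning with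
an invocation and possibly ending with an invocation. -/
inductive Alternating : List (Event T A V) → Prop where
  | nil : Alternating []
  | single (e : Event T A V) : e.isInv = true → Alternating [e]
  | cons (i r : Event T A V) (rest : List (Event T A V)) :
      i.isInv = true → Matches i r → Alternating rest → Alternating (i :: r :: rest)

/-- Well-formedness of the projection `l = h|t`. -/
def WfProj (t : T) (l : List (Event T A V)) : Prop :=
  l = [] ∨ (l.head? = some (.invBegin t) ∧
    ∀ i, 0 < i → i + 1 < l.length →
      l[i]? ≠ some (.respBegin t) ∧ l[i]? ≠ some (.respCommit t) ∧
      l[i]? ≠ some (.respAbort t))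

/-- A history is well-formed if every projection is alternating and well-formed. -/
def WellFormed (h : List (Event T A V)) : Prop :=
  ∀ t : T, Alternating (proj h t) ∧ WfProj t (proj h t)

def Committed (h : List (Event T A V)) (t : T) : Prop :=
  (proj h t).getLast? = some (.respCommit t)

def Aborted (h : List (Event T A V)) (t : T) : Prop :=
  (proj h t).getLast? = some (.respAbort t)

def Finished (h : List (Event T A V)) (t : T) : Prop := Committed h t ∨ Aborted h t

/-- `h ≡ h'` iff `h|t = h'|t` for all transactions `t`. -/
def Equiv (h h' : List (Event T A V)) : Prop := ∀ t : T, proj h t = proj h' t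

/-- Real-time order on transactions: `t` is finished and the last event of `t`
precedes the first event of `t'`. -/
def TransPrec (h : List (Event T A V)) (t t' : T) : Prop :=
  Finished h t ∧ (∃ e ∈ h, e.tx = t') ∧
    ∀ (i j : ℕ) (e e' : Event T A V), h[i]? = some e → h[j]? = some e' →
      e.tx = t → e'.tx = t' → i < j

/-- Positions (in `h`) of the events of transaction `t`, in order. -/
def txPositions (h : List (Event T A V)) (t : T) : List ℕ :=
  (List.range h.length).filter (fun i => decide ((h[i]?).map Event.tx = some t))

/-- Real-time order on operation calls. An operation call is identified by its
transaction together with its index `k` within `h|t`: its invocation is the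
`2k`-th event of `t` and its response the `2k+1`-th event of `t`.
`OpPrec h o o'` holds iff the response of `o` precedes the invocation of `o'`. -/
def OpPrec (h : List (Event T A V)) (o o' : T × ℕ) : Prop :=
  ∃ i j, (txPositions h o.1)[2 * o.2 + 1]? = some i ∧
    (txPositions h o'.1)[2 * o'.2]? = some j ∧ i < j

/-- Helper for `complete`, processing the reversed history; an invocation whose
transaction has no later event is pending and gets removed. -/
def completeRev : List (Event T A V) → List T → List (Event T A V)
  | [], _ => []
  | e :: rest, seen =>
    if e.isInv && !(seen.contains e.tx) then completeRev rest (e.tx :: seen)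
    else e :: completeRev rest (e.tx :: seen)

/-- `[h]`: the history `h` with all pending invocations removed. -/
def complete (h : List (Event T A V)) : List (Event T A V) :=
  (completeRev h.reverse []).reverse

/-- `Extends h he`: `he` is obtained from `h` by appending matching responses
for some of the pending invocations of `h`. -/
def Extends (h he : List (Event T A V)) : Prop :=
  ∃ rs : List (Event T A V), he = h ++ rs ∧
    rs.Pairwise (fun r r' => r.tx ≠ r'.tx) ∧
    ∀ r ∈ rs, r.isResp = true ∧ ∃ i, (proj h r.tx).getLast? = some i ∧ Matches i r

/-- Non-interleaved history: transactions do not overlap. -/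
def NonInterleaved (h : List (Event T A V)) : Prop :=
  ∀ (h1 h2 h3 : List (Event T A V)) (p q : T),
    h = h1 ++ Event.invBegin p :: h2 ++ Event.invBegin q :: h3 →
    (∀ t : T, Event.invBegin t ∉ h2) →
    (Event.respCommit p ∈ h2 ∨ Event.respAbort p ∈ h2 ∨ ∀ e ∈ h3, e.tx ≠ p)

section Valid
variable [DecidableEq A] [DecidableEq V] [Zero V]

/-- Memory evolution for one invocation/response pair. -/
def stepOk (σ σ' : A → V) : Event T A V → Event T A V → Prop
  | .invWrite _ a v, .respWrite _ => σ' = Function.update σ a v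
  | .invRead _ a, .respRead _ v => σ a = v ∧ σ' = σ
  | _, _ => σ' = σ

/-- Valid history: an alternating sequence of invocations and matching responses
consistent with a sequence of memory states starting at the all-zero memory. -/
def Valid (h : List (Event T A V)) : Prop :=
  ∃ (n : ℕ) (σ : ℕ → A → V), h.length = 2 * n ∧ (∀ a, σ 0 a = (0 : V)) ∧
    ∀ i < n, ∃ ei er : Event T A V, h[2 * i]? = some ei ∧ h[2 * i + 1]? = some er ∧
      ei.isInv = true ∧ Matches ei er ∧ stepOk (σ i) (σ (i + 1)) ei er

/-- `hs` is legal at index `idx`: the projection of `hs[0..idx-1]` onto events of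
committed transactions plus events of the transaction of `hs(idx)` is valid. -/
def LegalAt (hs : List (Event T A V)) (idx : ℕ) : Prop :=
  ∀ e : Event T A V, hs[idx]? = some e →
    Valid ((hs.take idx).filter (fun e' =>
      decide ((proj (hs.take idx) e'.tx).getLast? = some (Event.respCommit e'.tx)) ||
      decide (e'.tx = e.tx)))

def Legal (hs : List (Event T A V)) : Prop := ∀ idx, LegalAt hs idx

/-- Sequential history: well-formed, non-interleaved and legal. -/
def Sequential (hs : List (Event T A V)) : Prop :=
  WellFormed hs ∧ NonInterleaved hs ∧ Legal hs

/-- End-to-end opacity. -/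
def EndToEndOpaque (h : List (Event T A V)) : Prop :=
  ∃ he, Extends h he ∧ ∃ hs, Sequential hs ∧ Equiv (complete he) hs ∧
    ∀ t t' : T, TransPrec (complete he) t t' → TransPrec hs t t'

/-- Opacity: every prefix is end-to-end opaque. -/
def Opaque (h : List (Event T A V)) : Prop :=
  ∀ h', h' <+: h → EndToEndOpaque h'

/-- `Lin h ha`: `[h] ≡ ha` and `≺≺_[h] ⊆ ≺≺_ha`. -/
def Lin (h ha : List (Event T A V)) : Prop :=
  Equiv (complete h) ha ∧ ∀ o o' : T × ℕ, OpPrec (complete h) o o' → OpPrec ha o o'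

/-- `ha` linearizes `h`: `lin(he, ha)` for some `he ∈ extend(h)`. -/
def Linearizes (ha h : List (Event T A V)) : Prop :=
  ∃ he, Extends h he ∧ Lin he ha

/-- Prefix-closed set of histories. -/
def PrefixClosed (S : Set (List (Event T A V))) : Prop :=
  ∀ h ∈ S, ∀ h', h' <+: h → h' ∈ S

end Valid
end Histories
end TM

/-! Since `ha` has no pending invocation, neither has any history with the same projections,
so the sequential witness of `ha` also serves for the transposed history. Swapping two
adjacent blocks whose events belong to disjoint transactions preserves every projection, and
the only pairs it can add to the real-time order `≺` are `t₁ ≺ t₂` with `t₁` in the block moved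
forward and `t₂` in the block moved back. In (1) no such pair arises because `t` already has
an event in `h1` (its history starts with `TXBegin_t`, and `o_t` is not one); in (2) because
`t'` either has an event in `h2`, after `o_t`, or is still live at the end. -/

namespace List

variable {α : Type*}

theorem Pairwise.swap_middle {R : α → α → Prop} {p X Y s : List α}
    (h : (p ++ Y ++ X ++ s).Pairwise R) (hXY : ∀ x ∈ X, ∀ y ∈ Y, R x y) :
    (p ++ X ++ Y ++ s).Pairwise R := by
  simp only [pairwise_append, mem_append] at h ⊢
  grind

theorem forall_getElem?_lt_iff {P Q : α → Prop} {l : List α} :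
    (∀ (i j : ℕ) (a b : α), l[i]? = some a → l[j]? = some b → P a → Q b → i < j) ↔
      (∀ a ∈ l, P a → ¬ Q a) ∧ l.Pairwise (fun a b => Q a → ¬ P b) := by
  rw [pairwise_iff_getElem]
  constructor
  · intro H
    refine ⟨fun a ha hP hQ => ?_, fun i j hi hj hij hQ hP => ?_⟩
    · obtain ⟨i, hi⟩ := mem_iff_getElem?.1 ha
      exact lt_irrefl i (H i i a a hi hi hP hQ)
    · exact absurd (H j i _ _ (getElem?_eq_getElem hj) (getElem?_eq_getElem hi) hP hQ)
        (not_lt.2 hij.le)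
  · rintro ⟨hdiag, hpw⟩ i j a b ha hb hP hQ
    obtain ⟨hi, rfl⟩ := getElem?_eq_some_iff.1 ha
    obtain ⟨hj, rfl⟩ := getElem?_eq_some_iff.1 hb
    by_contra! hji
    rcases hji.lt_or_eq with hlt | rfl
    · exact hpw j i hj hi hlt hQ hP
    · exact hdiag _ (getElem_mem hi) hP hQ

end List

namespace TM

variable {T A V : Type}

theorem Matches.isInv {i r : Event T A V} (h : Matches i r) : i.isInv = true := by
  cases h <;> rfl

variable [DecidableEq T]

theorem proj_append (l l' : List (Event T A V)) (u : T) :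
    proj (l ++ l') u = proj l u ++ proj l' u :=
  List.filter_append ..

theorem proj_eq_nil {l : List (Event T A V)} {u : T} (h : ∀ e ∈ l, e.tx ≠ u) :
    proj l u = [] := by
  simpa [proj] using h

theorem completeRev_length_le (l : List (Event T A V)) (seen : List T) :
    (completeRev l seen).length ≤ l.length := by
  induction l generalizing seen with
  | nil => simp [completeRev]
  | cons e rest ih =>
    rw [completeRev]
    split
    · exact (ih _).trans (Nat.le_succ _)
    · simpa using ih _

theorem completeRev_eq_self_iff (l : List (Event T A V)) (seen : List T) :
    completeRev l seen = l ↔ ∀ u ∉ seen, ∀ e,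
      (l.filter fun e => decide (e.tx = u)).head? = some e → e.isInv = false := by
  induction l generalizing seen with
  | nil => simp [completeRev]
  | cons e rest ih =>
    rw [completeRev]
    split_ifs with hdrop
    · have hlen := completeRev_length_le rest (e.tx :: seen)
      simp only [Bool.and_eq_true, Bool.not_eq_eq_eq_not, Bool.not_true,
        List.contains_eq_mem, decide_eq_false_iff_not] at hdrop
      refine iff_of_false (fun h => ?_) fun H => ?_
      · have := congrArg List.length h
        simp only [List.length_cons] at this
        omega
      · simpa [hdrop.1] using H e.tx hdrop.2 e
    · rw [List.cons.injEq, ih]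
      simp only [true_and, List.mem_cons, not_or, List.filter_cons]
      constructor
      · intro H u hu e' he'
        by_cases heu : e.tx = u
        · subst heu
          simp only [decide_true, if_true, List.head?_cons, Option.some.injEq] at he'
          subst he'
          simpa [hu] using hdrop
        · exact H u ⟨Ne.symm heu, hu⟩ e' (by simpa [heu] using he')
      · intro H u ⟨hue, hu⟩ e' he'
        exact H u hu e' (by simpa [Ne.symm hue] using he')

theorem complete_eq_self_iff (h : List (Event T A V)) :
    complete h = h ↔ ∀ u e, (proj h u).getLast? = some e → e.isInv = false := by
  rw [complete, ← List.reverse_inj, List.reverse_reverse, completeRev_eq_self_iff]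
  simp only [List.not_mem_nil, not_false_eq_true, true_implies, List.filter_reverse,
    List.head?_reverse, proj]

theorem complete_eq_self_of_equiv {h h' : List (Event T A V)} (hc : complete h = h)
    (he : Equiv h' h) : complete h' = h' := by
  rw [complete_eq_self_iff] at hc ⊢
  simpa only [he _] using hc

theorem Extends.eq_of_complete_eq_self {h he : List (Event T A V)} (hc : complete h = h)
    (hext : Extends h he) : he = h := by
  obtain ⟨rs, rfl, -, hrs⟩ := hext
  cases rs with
  | nil => exact List.append_nil h
  | cons r rs =>
    obtain ⟨-, i, hlast, hi⟩ := hrs r List.mem_cons_self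
    simpa [hi.isInv] using (complete_eq_self_iff h).1 hc r.tx i hlast

theorem extends_refl (h : List (Event T A V)) : Extends h h :=
  ⟨[], (List.append_nil h).symm, List.Pairwise.nil, by simp⟩

theorem finished_iff_of_equiv {h h' : List (Event T A V)} (he : Equiv h h') (u : T) :
    Finished h u ↔ Finished h' u := by
  simp only [Finished, Committed, Aborted, he u]

theorem transPrec_iff {h : List (Event T A V)} {t₁ t₂ : T} :
    TransPrec h t₁ t₂ ↔ Finished h t₁ ∧ (∃ e ∈ h, e.tx = t₂) ∧
      (∀ e ∈ h, e.tx = t₁ → e.tx ≠ t₂) ∧ h.Pairwise (fun e e' => e.tx = t₂ → e'.tx ≠ t₁) :=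
  and_congr_right' (and_congr_right' List.forall_getElem?_lt_iff)

theorem TransPrec.tx_ne_of_append {u v : List (Event T A V)} {t₁ t₂ : T}
    (H : TransPrec (u ++ v) t₁ t₂) {x y : Event T A V} (hx : x ∈ u) (hy : y ∈ v)
    (hyt : y.tx = t₁) : x.tx ≠ t₂ :=
  fun hxt => (List.pairwise_append.1 (transPrec_iff.1 H).2.2.2).2.2 x hx y hy hxt hyt

theorem equiv_swap_middle {p X Y s : List (Event T A V)}
    (hXY : ∀ x ∈ X, ∀ y ∈ Y, x.tx ≠ y.tx) : Equiv (p ++ Y ++ X ++ s) (p ++ X ++ Y ++ s) := by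
  intro u
  simp only [proj_append]
  by_cases hX : ∃ x ∈ X, x.tx = u
  · obtain ⟨x, hx, rfl⟩ := hX
    rw [proj_eq_nil fun y hy => (hXY x hx y hy).symm]
    simp
  · push Not at hX
    rw [proj_eq_nil hX]
    simp

theorem TransPrec.swap_middle {p X Y s : List (Event T A V)} {t₁ t₂ : T}
    (hXY : ∀ x ∈ X, ∀ y ∈ Y, x.tx ≠ y.tx) (H : TransPrec (p ++ Y ++ X ++ s) t₁ t₂)
    (hblock : ∀ x ∈ X, x.tx = t₂ → ∀ y ∈ Y, y.tx ≠ t₁) :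
    TransPrec (p ++ X ++ Y ++ s) t₁ t₂ := by
  have hmem : ∀ e, e ∈ p ++ Y ++ X ++ s ↔ e ∈ p ++ X ++ Y ++ s := by
    simp only [List.mem_append]
    tauto
  obtain ⟨hfin, ⟨e, he, het⟩, hdiag, hpw⟩ := transPrec_iff.1 H
  exact transPrec_iff.2 ⟨(finished_iff_of_equiv (equiv_swap_middle hXY) t₁).1 hfin,
    ⟨e, (hmem e).1 he, het⟩, fun e he => hdiag e ((hmem e).2 he),
    hpw.swap_middle fun x hx y hy hxt => hblock x hx hxt y hy⟩

theorem WellFormed.exists_mem_of_ne_invBegin {p s : List (Event T A V)} {e : Event T A V}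
    (hwf : WellFormed (p ++ e :: s)) (he : e ≠ .invBegin e.tx) : ∃ x ∈ p, x.tx = e.tx := by
  by_contra! hp
  have hproj : proj (p ++ e :: s) e.tx = e :: proj s e.tx := by
    rw [proj_append, proj_eq_nil hp, List.nil_append]
    simp [proj]
  rcases (hwf e.tx).2 with hnil | ⟨hhead, -⟩ <;> rw [hproj] at *
  · exact List.cons_ne_nil _ _ hnil
  · exact he (Option.some.inj hhead)

theorem finished_append_iff_of_forall_ne {l s : List (Event T A V)} {u : T}
    (hs : ∀ x ∈ s, x.tx ≠ u) : Finished (l ++ s) u ↔ Finished l u := by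
  simp only [Finished, Committed, Aborted, proj_append, proj_eq_nil hs, List.append_nil]

section Opacity

variable [DecidableEq A] [DecidableEq V] [Zero V]

theorem EndToEndOpaque.of_equiv {h h' : List (Event T A V)} (hc : complete h = h)
    (hopq : EndToEndOpaque h) (he : Equiv h' h)
    (hprec : ∀ t₁ t₂, TransPrec h' t₁ t₂ → TransPrec h t₁ t₂) : EndToEndOpaque h' := by
  have hc' := complete_eq_self_of_equiv hc he
  obtain ⟨he₀, hext, hs, hseq, hequiv, hsprec⟩ := hopq
  rw [hext.eq_of_complete_eq_self hc, hc] at hequiv hsprec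
  refine ⟨h', extends_refl h', hs, hseq, fun u => ?_, fun t₁ t₂ H => ?_⟩
  · rw [hc', he u, hequiv u]
  · exact hsprec t₁ t₂ (hprec t₁ t₂ (hc' ▸ H))

theorem EndToEndOpaque.swap_middle {p X Y s : List (Event T A V)}
    (hc : complete (p ++ X ++ Y ++ s) = p ++ X ++ Y ++ s)
    (hopq : EndToEndOpaque (p ++ X ++ Y ++ s)) (hXY : ∀ x ∈ X, ∀ y ∈ Y, x.tx ≠ y.tx)
    (hblock : ∀ t₁ t₂, TransPrec (p ++ Y ++ X ++ s) t₁ t₂ →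
      ∀ x ∈ X, x.tx = t₂ → ∀ y ∈ Y, y.tx ≠ t₁) :
    EndToEndOpaque (p ++ Y ++ X ++ s) ∧ Equiv (p ++ Y ++ X ++ s) (p ++ X ++ Y ++ s) :=
  ⟨hopq.of_equiv hc (equiv_swap_middle hXY) fun _ _ H => H.swap_middle hXY (hblock _ _ H),
    equiv_swap_middle hXY⟩

theorem EndToEndOpaque.swap_middle_of_begun {p X Y s : List (Event T A V)} {t : T}
    (hc : complete (p ++ X ++ Y ++ s) = p ++ X ++ Y ++ s)
    (hopq : EndToEndOpaque (p ++ X ++ Y ++ s)) (hXY : ∀ x ∈ X, ∀ y ∈ Y, x.tx ≠ y.tx)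
    (hX : ∀ x ∈ X, x.tx = t) (hp : ∃ e ∈ p, e.tx = t) :
    EndToEndOpaque (p ++ Y ++ X ++ s) ∧ Equiv (p ++ Y ++ X ++ s) (p ++ X ++ Y ++ s) := by
  obtain ⟨e, he, het⟩ := hp
  refine hopq.swap_middle hc hXY fun t₁ t₂ H x hx hxt y hy hyt => ?_
  rw [List.append_assoc, List.append_assoc] at H
  exact H.tx_ne_of_append he (List.mem_append_left _ hy) hyt
    (het.trans ((hX x hx).symm.trans hxt))

theorem EndToEndOpaque.swap_middle_of_live {p X Y s : List (Event T A V)} {t : T}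
    (hc : complete (p ++ X ++ Y ++ s) = p ++ X ++ Y ++ s)
    (hopq : EndToEndOpaque (p ++ X ++ Y ++ s)) (hXY : ∀ x ∈ X, ∀ y ∈ Y, x.tx ≠ y.tx)
    (hY : ∀ y ∈ Y, y.tx = t) (hlive : ¬ Finished (p ++ Y) t) :
    EndToEndOpaque (p ++ Y ++ X ++ s) ∧ Equiv (p ++ Y ++ X ++ s) (p ++ X ++ Y ++ s) := by
  refine hopq.swap_middle hc hXY fun t₁ t₂ H x hx hxt y hy hyt => ?_
  obtain rfl : t = t₁ := (hY y hy).symm.trans hyt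
  by_cases hlate : ∃ e ∈ s, e.tx = t
  · obtain ⟨e, he, het⟩ := hlate
    exact H.tx_ne_of_append (List.mem_append_right _ hx) he het hxt
  · push Not at hlate
    have hXs : ∀ e ∈ X ++ s, e.tx ≠ t := by
      simp only [List.mem_append]
      rintro e (he | he)
      exacts [hY y hy ▸ hXY e he y hy, hlate e he]
    have hfin := (transPrec_iff.1 H).1
    rw [List.append_assoc, finished_append_iff_of_forall_ne hXs] at hfin
    exact hlive hfin

end Opacity

end TM

theorem transpose_preserves_end_to_end_opacity_general {T A V : Type}
    [DecidableEq T] [DecidableEq A] [DecidableEq V] [Zero V]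
    (h1 g h2 : List (TM.Event T A V)) (it rt it' rt' : TM.Event T A V)
    (t t' : T)
    (htx : it.tx = t) (hrtx : rt.tx = t)
    (htx' : it'.tx = t') (hrtx' : rt'.tx = t')
    (htt' : t ≠ t')
    (hg : ∀ e ∈ g, e.tx ≠ t ∧ e.tx ≠ t')
    (ha : List (TM.Event T A V))
    (hha : ha = h1 ++ [it, rt] ++ g ++ [it', rt'] ++ h2)
    (hwf : TM.WellFormed ha)
    (hcomplete : TM.complete ha = ha)
    (hopq : TM.EndToEndOpaque ha) :
    ((∀ u : T, it ≠ TM.Event.invBegin u) →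
      TM.EndToEndOpaque (h1 ++ g ++ [it', rt'] ++ [it, rt] ++ h2) ∧
      TM.Equiv (h1 ++ g ++ [it', rt'] ++ [it, rt] ++ h2) ha) ∧
    ((rt' ≠ TM.Event.respCommit t' ∧ rt' ≠ TM.Event.respAbort t') →
      TM.EndToEndOpaque (h1 ++ [it', rt'] ++ [it, rt] ++ g ++ h2) ∧
      TM.Equiv (h1 ++ [it', rt'] ++ [it, rt] ++ g ++ h2) ha) := by
  subst hha
  have hot : ∀ x ∈ [it, rt], x.tx = t := by simp [htx, hrtx]
  have hot' : ∀ y ∈ [it', rt'], y.tx = t' := by simp [htx', hrtx']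
  refine ⟨fun hnb => ?_, fun ⟨hnc, hna⟩ => ?_⟩
  · have hXY : ∀ x ∈ [it, rt], ∀ y ∈ g ++ [it', rt'], x.tx ≠ y.tx := by
      simp only [List.mem_append]
      rintro x hx y (hy | hy) <;> rw [hot x hx]
      exacts [(hg y hy).1.symm, hot' y hy ▸ htt']
    obtain ⟨e, he, het⟩ : ∃ e ∈ h1, e.tx = it.tx :=
      TM.WellFormed.exists_mem_of_ne_invBegin (s := rt :: (g ++ [it', rt'] ++ h2))
        (by simpa using hwf) (hnb _)
    simpa using TM.EndToEndOpaque.swap_middle_of_begun (p := h1) (s := h2)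
      (by simpa using hcomplete) (by simpa using hopq) hXY hot ⟨e, he, het.trans htx⟩
  · have hXY : ∀ x ∈ [it, rt] ++ g, ∀ y ∈ [it', rt'], x.tx ≠ y.tx := by
      simp only [List.mem_append]
      rintro x (hx | hx) y hy <;> rw [hot' y hy]
      exacts [hot x hx ▸ htt', (hg x hx).2]
    have hlive : ¬ TM.Finished (h1 ++ [it', rt']) t' := by
      simp [TM.Finished, TM.Committed, TM.Aborted, TM.proj, htx', hrtx', hnc, hna]
    simpa using TM.EndToEndOpaque.swap_middle_of_live (p := h1) (s := h2)
      (by simpa using hcomplete) (by simpa using hopq) hXY hot' hlive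

/-- Transposition lemma: in a well-formed alternating end-to-end opaque history
`ha = h1 · o_t · g · o_t' · h2` with all invocations matched, where `o_t = ⟨it, rt⟩`
and `o_t' = ⟨it', rt'⟩` are completed operation calls of distinct transactions and
`g` contains no events of `t` or `t'`:
(1) if `o_t` is not a begin operation then `h1 · g · o_t' · o_t · h2` is
end-to-end opaque and equivalent to `ha`; and
(2) if the response of `o_t'` is neither a commit nor an abort response then
`h1 · o_t' · o_t · g · h2` is end-to-end opaque and equivalent to `ha`. -/
theorem transpose_preserves_end_to_end_opacity {T A V : Type}
    [DecidableEq T] [DecidableEq A] [DecidableEq V] [Zero V]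
    (h1 g h2 : List (TM.Event T A V)) (it rt it' rt' : TM.Event T A V)
    (t t' : T)
    (htx : it.tx = t) (hrtx : rt.tx = t)
    (htx' : it'.tx = t') (hrtx' : rt'.tx = t')
    (htt' : t ≠ t')
    (hinv : it.isInv = true) (hmatch : TM.Matches it rt)
    (hinv' : it'.isInv = true) (hmatch' : TM.Matches it' rt')
    (hg : ∀ e ∈ g, e.tx ≠ t ∧ e.tx ≠ t')
    (ha : List (TM.Event T A V))
    (hha : ha = h1 ++ [it, rt] ++ g ++ [it', rt'] ++ h2)
    (hwf : TM.WellFormed ha)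
    (halt : TM.Alternating ha)
    (hcomplete : TM.complete ha = ha)
    (hopq : TM.EndToEndOpaque ha) :
    ((∀ u : T, it ≠ TM.Event.invBegin u) →
      TM.EndToEndOpaque (h1 ++ g ++ [it', rt'] ++ [it, rt] ++ h2) ∧
      TM.Equiv (h1 ++ g ++ [it', rt'] ++ [it, rt] ++ h2) ha) ∧
    ((rt' ≠ TM.Event.respCommit t' ∧ rt' ≠ TM.Event.respAbort t') →
      TM.EndToEndOpaque (h1 ++ [it', rt'] ++ [it, rt] ++ g ++ h2) ∧
      TM.Equiv (h1 ++ [it', rt'] ++ [it, rt] ++ g ++ h2) ha) :=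
  transpose_preserves_end_to_end_opacity_general h1 g h2 it rt it' rt' t t' htx hrtx htx' hrtx' htt'
    hg ha hha hwf hcomplete hopq
end

section
/- Let hs and hc be well-formed alternating histories in which every invocation has a matching response, with hc ≡ hs; identify operation calls across the two histories via their positions in the per-transaction projections. Call a pair of operation calls (o, o') mis-ordered if o ≺≺_hs o' and o' ≺≺_hc o. If some mis-ordered pair exists, then any mis-ordered pair (o_t, o_{t'}) minimizing the number of events strictly between o_t and o_{t'} in hs satisfies: the transactions t of o_t and t' of o_{t'} are distinct, and no event strictly between o_t and o_{t'} in hs belongs to transaction t or to transaction t'. -/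
/-- Position in `h` of the response of operation call `o` (its transaction's
`(2 o.2 + 1)`-th event). -/
def TM.respPos {T A V : Type} [DecidableEq T]
    (h : List (TM.Event T A V)) (o : T × ℕ) : ℕ :=
  ((TM.txPositions h o.1)[2 * o.2 + 1]?).getD 0

/-- Position in `h` of the invocation of operation call `o` (its transaction's
`(2 o.2)`-th event). -/
def TM.invPos {T A V : Type} [DecidableEq T]
    (h : List (TM.Event T A V)) (o : T × ℕ) : ℕ :=
  ((TM.txPositions h o.1)[2 * o.2]?).getD 0

/-- A mis-ordered pair: `o ≺≺_hs o'` but `o' ≺≺_hc o`. -/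
def TM.MisOrdered {T A V : Type} [DecidableEq T]
    (hs hc : List (TM.Event T A V)) (o o' : T × ℕ) : Prop :=
  TM.OpPrec hs o o' ∧ TM.OpPrec hc o' o

theorem List.SortedLT.lt_iff_of_getElem? {α : Type*} [LinearOrder α] {l : List α}
    (hl : l.SortedLT) {i j : ℕ} {a b : α} (hi : l[i]? = some a) (hj : l[j]? = some b) :
    a < b ↔ i < j := by
  obtain ⟨_, rfl⟩ := List.getElem?_eq_some_iff.mp hi
  obtain ⟨_, rfl⟩ := List.getElem?_eq_some_iff.mp hj
  exact hl.getElem_lt_getElem_iff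

namespace TM

variable {T A V : Type}

theorem Matches.tx_eq {i r : Event T A V} (h : Matches i r) : i.tx = r.tx := by
  cases h <;> rfl

section Positions

variable [DecidableEq T] {h : List (Event T A V)} {t : T}

theorem sortedLT_txPositions (h : List (Event T A V)) (t : T) : (txPositions h t).SortedLT :=
  (List.pairwise_lt_range.filter _).sortedLT

theorem mem_txPositions {p : ℕ} : p ∈ txPositions h t ↔ (h[p]?).map Event.tx = some t := by
  simp only [txPositions, List.mem_filter, List.mem_range, decide_eq_true_eq,
    and_iff_right_iff_imp]
  intro hp
  by_contra hlen
  simp [List.getElem?_eq_none (not_lt.mp hlen)] at hp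

theorem lt_length_of_mem_txPositions {p : ℕ} (hp : p ∈ txPositions h t) : p < h.length :=
  List.mem_range.mp (List.mem_filter.mp hp).1

theorem txPositions_cons (e : Event T A V) (h : List (Event T A V)) (t : T) :
    txPositions (e :: h) t = (if e.tx = t then [0] else []) ++ (txPositions h t).map (· + 1) := by
  simp only [txPositions, List.length_cons, List.range_succ_eq_map, List.filter_cons,
    List.filter_map]
  by_cases he : e.tx = t <;> simp [he, Function.comp_def]

theorem length_txPositions (h : List (Event T A V)) (t : T) :
    (txPositions h t).length = (proj h t).length := by
  induction h with
  | nil => rfl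
  | cons e h ih =>
    by_cases he : e.tx = t <;> simp [txPositions_cons, proj, he, ih]

theorem Equiv.length_txPositions_eq {h' : List (Event T A V)} (heq : Equiv h h') (t : T) :
    (txPositions h t).length = (txPositions h' t).length := by
  rw [length_txPositions, length_txPositions, heq t]

theorem respPos_eq {o : T × ℕ} {p : ℕ} (hp : (txPositions h o.1)[2 * o.2 + 1]? = some p) :
    respPos h o = p := by
  simp [respPos, hp]

theorem invPos_eq {o : T × ℕ} {p : ℕ} (hp : (txPositions h o.1)[2 * o.2]? = some p) :
    invPos h o = p := by
  simp [invPos, hp]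

end Positions

section Alternating

variable {h : List (Event T A V)}

theorem Alternating.map_tx_getElem?_succ (ha : Alternating h) {m : ℕ} (hm : 2 * m + 1 < h.length) :
    (h[2 * m + 1]?).map Event.tx = (h[2 * m]?).map Event.tx := by
  induction ha generalizing m with
  | nil => simp at hm
  | single => simp at hm
  | cons i r rest _ hir _ ih =>
    cases m with
    | zero => simp [hir.tx_eq]
    | succ m => simpa [Nat.mul_succ] using ih (m := m) (by simp at hm; omega)

variable [DecidableEq T] {t : T}

theorem Alternating.succ_mem_txPositions_iff (ha : Alternating h) {m : ℕ}
    (hm : 2 * m + 1 < h.length) :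
    2 * m + 1 ∈ txPositions h t ↔ 2 * m ∈ txPositions h t := by
  rw [mem_txPositions, mem_txPositions, ha.map_tx_getElem?_succ hm]

theorem Alternating.mod_two_of_getElem?_txPositions (ha : Alternating h) {m p : ℕ}
    (hp : (txPositions h t)[m]? = some p) : p % 2 = m % 2 := by
  induction ha generalizing m p with
  | nil => simp [txPositions] at hp
  | single e =>
    obtain ⟨hm, rfl⟩ := List.getElem?_eq_some_iff.mp hp
    by_cases he : e.tx = t <;> cases m <;> simp_all [txPositions]
  | cons i r rest _ hir _ ih =>
    have hshift : ∀ {n q}, ((txPositions rest t).map (· + 1 + 1))[n]? = some q →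
        q % 2 = n % 2 := by
      intro n q hq
      obtain ⟨q', hq', rfl⟩ := Option.map_eq_some_iff.mp (List.getElem?_map .. ▸ hq)
      have := ih hq'
      omega
    by_cases hi : i.tx = t
    · rw [txPositions_cons, txPositions_cons, if_pos hi, if_pos (hir.tx_eq ▸ hi)] at hp
      match m, hp with
      | 0, hp => simp_all
      | 1, hp => simp_all
      | n + 2, hp =>
        have := hshift (n := n) (by simpa [List.map_map, Function.comp_def] using hp)
        omega
    · rw [txPositions_cons, txPositions_cons, if_neg hi, if_neg (hir.tx_eq ▸ hi)] at hp
      exact hshift (by simpa [List.map_map, Function.comp_def] using hp)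

theorem Alternating.exists_getElem?_txPositions (ha : Alternating h) {p : ℕ}
    (hp : p ∈ txPositions h t) : ∃ m, (txPositions h t)[m]? = some p ∧ m % 2 = p % 2 := by
  obtain ⟨m, hm⟩ := List.mem_iff_getElem?.mp hp
  exact ⟨m, hm, (ha.mod_two_of_getElem?_txPositions hm).symm⟩

end Alternating

section MisOrdered

variable [DecidableEq T] {hs hc : List (Event T A V)} {o o' : T × ℕ}

theorem MisOrdered.fst_ne (hmo : MisOrdered hs hc o o') : o.1 ≠ o'.1 := by
  obtain ⟨⟨r, i, hr, hi, hri⟩, ⟨rc, ic, hrc, hic, hrcic⟩⟩ := hmo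
  intro h
  rw [← h] at hi hrc
  have h₁ := ((sortedLT_txPositions hs o.1).lt_iff_of_getElem? hr hi).mp hri
  have h₂ := ((sortedLT_txPositions hc o.1).lt_iff_of_getElem? hrc hic).mp hrcic
  omega

theorem MisOrdered.of_resp_between (heq : Equiv hc hs) (hmo : MisOrdered hs hc o o') {j x : ℕ}
    (hx : (txPositions hs o.1)[2 * j + 1]? = some x) (hrx : respPos hs o < x)
    (hxi : x < invPos hs o') : MisOrdered hs hc (o.1, j) o' := by
  obtain ⟨⟨r, i, hr, hi, -⟩, ⟨rc, ic, hrc, hic, hrcic⟩⟩ := hmo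
  rw [respPos_eq hr] at hrx
  rw [invPos_eq hi] at hxi
  have hkj := ((sortedLT_txPositions hs o.1).lt_iff_of_getElem? hr hx).mp hrx
  have hlen : 2 * j < (txPositions hc o.1).length := by
    rw [heq.length_txPositions_eq]
    have := (List.getElem?_eq_some_iff.mp hx).1
    omega
  refine ⟨⟨x, i, hx, hi, hxi⟩, ⟨rc, _, hrc, List.getElem?_eq_getElem hlen, ?_⟩⟩
  have := ((sortedLT_txPositions hc o.1).lt_iff_of_getElem? hic
    (List.getElem?_eq_getElem hlen)).mpr (by omega)
  omega

theorem MisOrdered.of_inv_between (hmo : MisOrdered hs hc o o') {j x : ℕ}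
    (hx : (txPositions hs o'.1)[2 * j]? = some x) (hrx : respPos hs o < x)
    (hxi : x < invPos hs o') : MisOrdered hs hc o (o'.1, j) := by
  obtain ⟨⟨r, i, hr, hi, -⟩, ⟨rc, ic, hrc, hic, hrcic⟩⟩ := hmo
  rw [respPos_eq hr] at hrx
  rw [invPos_eq hi] at hxi
  have hjk := ((sortedLT_txPositions hs o'.1).lt_iff_of_getElem? hx hi).mp hxi
  have hlen : 2 * j + 1 < (txPositions hc o'.1).length := by
    have := (List.getElem?_eq_some_iff.mp hrc).1
    omega
  refine ⟨⟨r, x, hr, hx, hrx⟩, ⟨_, ic, List.getElem?_eq_getElem hlen, hic, ?_⟩⟩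
  have := ((sortedLT_txPositions hc o'.1).lt_iff_of_getElem? (List.getElem?_eq_getElem hlen)
    hrc).mpr (by omega)
  omega

theorem MisOrdered.tx_ne_fst_of_minimal (halt : Alternating hs) (heq : Equiv hc hs)
    (hmo : MisOrdered hs hc o o')
    (hmin : ∀ p p' : T × ℕ, MisOrdered hs hc p p' →
      invPos hs o' - respPos hs o - 1 ≤ invPos hs p' - respPos hs p - 1)
    {k : ℕ} (hrk : respPos hs o < k) (hki : k < invPos hs o') {e : Event T A V}
    (hk : hs[k]? = some e) : e.tx ≠ o.1 := by
  intro hte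
  obtain ⟨r, i, hr, hi, -⟩ := hmo.1
  rw [respPos_eq hr] at hrk
  rw [invPos_eq hi] at hki
  have hi_even := halt.mod_two_of_getElem?_txPositions hi
  have hi_len := lt_length_of_mem_txPositions (List.mem_of_getElem? hi)
  have hk_mem : k ∈ txPositions hs o.1 := mem_txPositions.mpr (by simp [hk, hte])
  obtain ⟨q, hq⟩ := Nat.even_or_odd' k
  have hresp : 2 * q + 1 ∈ txPositions hs o.1 := by
    rcases hq with rfl | rfl
    · exact (halt.succ_mem_txPositions_iff (by omega)).mpr hk_mem
    · exact hk_mem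
  obtain ⟨m, hm, hm_odd⟩ := halt.exists_getElem?_txPositions hresp
  obtain ⟨j, rfl⟩ : ∃ j, m = 2 * j + 1 := ⟨m / 2, by omega⟩
  have hcloser := hmin _ _ (hmo.of_resp_between heq hm
    (by rw [respPos_eq hr]; omega) (by rw [invPos_eq hi]; omega))
  rw [respPos_eq hr, invPos_eq hi, respPos_eq hm] at hcloser
  omega

/-- The invocation found here is not the partner of `o`'s response, since responses sit at odd
positions. -/
theorem MisOrdered.tx_ne_snd_of_minimal (halt : Alternating hs) (hmo : MisOrdered hs hc o o')
    (hmin : ∀ p p' : T × ℕ, MisOrdered hs hc p p' →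
      invPos hs o' - respPos hs o - 1 ≤ invPos hs p' - respPos hs p - 1)
    {k : ℕ} (hrk : respPos hs o < k) (hki : k < invPos hs o') {e : Event T A V}
    (hk : hs[k]? = some e) : e.tx ≠ o'.1 := by
  intro hte
  obtain ⟨r, i, hr, hi, -⟩ := hmo.1
  rw [respPos_eq hr] at hrk
  rw [invPos_eq hi] at hki
  have hr_odd := halt.mod_two_of_getElem?_txPositions hr
  have hi_len := lt_length_of_mem_txPositions (List.mem_of_getElem? hi)
  have hk_mem : k ∈ txPositions hs o'.1 := mem_txPositions.mpr (by simp [hk, hte])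
  obtain ⟨q, hq⟩ := Nat.even_or_odd' k
  have hinv : 2 * q ∈ txPositions hs o'.1 := by
    rcases hq with rfl | rfl
    · exact hk_mem
    · exact (halt.succ_mem_txPositions_iff (by omega)).mp hk_mem
  obtain ⟨m, hm, hm_even⟩ := halt.exists_getElem?_txPositions hinv
  obtain ⟨j, rfl⟩ : ∃ j, m = 2 * j := ⟨m / 2, by omega⟩
  have hcloser := hmin _ _ (hmo.of_inv_between hm
    (by rw [respPos_eq hr]; omega) (by rw [invPos_eq hi]; omega))
  rw [respPos_eq hr, invPos_eq hi, invPos_eq hm] at hcloser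
  omega

end MisOrdered

end TM

theorem minimal_misordered_pair_general {T A V : Type}
    [DecidableEq T]
    (hs hc : List (TM.Event T A V))
    (halts : TM.Alternating hs)
    (heq : TM.Equiv hc hs)
    (ot ot' : T × ℕ)
    (hmo : TM.MisOrdered hs hc ot ot')
    (hmin : ∀ p p' : T × ℕ, TM.MisOrdered hs hc p p' →
      TM.invPos hs ot' - TM.respPos hs ot - 1 ≤
        TM.invPos hs p' - TM.respPos hs p - 1) :
    ot.1 ≠ ot'.1 ∧
    ∀ k : ℕ, TM.respPos hs ot < k → k < TM.invPos hs ot' →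
      ∀ e : TM.Event T A V, hs[k]? = some e → e.tx ≠ ot.1 ∧ e.tx ≠ ot'.1 :=
  ⟨hmo.fst_ne, fun _ hrk hki _ hk =>
    ⟨hmo.tx_ne_fst_of_minimal halts heq hmin hrk hki hk,
      hmo.tx_ne_snd_of_minimal halts hmin hrk hki hk⟩⟩

/-- If some mis-ordered pair exists, then a mis-ordered pair `(o_t, o_t')`
minimizing the number of events strictly between `o_t` and `o_t'` in `hs`
has distinct transactions, and no event strictly between `o_t` and `o_t'`
in `hs` belongs to either of those transactions. -/
theorem minimal_misordered_pair {T A V : Type}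
    [DecidableEq T] [DecidableEq A] [DecidableEq V] [Zero V]
    (hs hc : List (TM.Event T A V))
    (hwfs : TM.WellFormed hs) (hwfc : TM.WellFormed hc)
    (halts : TM.Alternating hs) (haltc : TM.Alternating hc)
    (hnps : TM.complete hs = hs) (hnpc : TM.complete hc = hc)
    (heq : TM.Equiv hc hs)
    (hex : ∃ o o' : T × ℕ, TM.MisOrdered hs hc o o')
    (ot ot' : T × ℕ)
    (hmo : TM.MisOrdered hs hc ot ot')
    (hmin : ∀ p p' : T × ℕ, TM.MisOrdered hs hc p p' →
      TM.invPos hs ot' - TM.respPos hs ot - 1 ≤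
        TM.invPos hs p' - TM.respPos hs p - 1) :
    ot.1 ≠ ot'.1 ∧
    ∀ k : ℕ, TM.respPos hs ot < k → k < TM.invPos hs ot' →
      ∀ e : TM.Event T A V, hs[k]? = some e → e.tx ≠ ot.1 ∧ e.tx ≠ ot'.1 :=
  minimal_misordered_pair_general hs hc halts heq ot ot' hmo hmin
end

section
/- The automata TMS2 and TMS3 have exactly the same set of traces; that is, TMS2 refines TMS3 and TMS3 refines TMS2 (TMS2 and TMS3 are equivalent). -/
namespace TMS

/-- The status of a transaction in TMS2/TMS3. -/
inductive Status (A V : Type) where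
  | notStarted | beginPending | ready
  | doRead (a : A) | readResp (v : V)
  | doWrite (a : A) (v : V) | writeResp
  | doCommit | commitResp | committed | aborted
  deriving DecidableEq

/-- The state of the TMS2/TMS3 automata. -/
structure State (T A V : Type) where
  /-- The (nonempty) sequence of memory snapshots, indexed from 0. -/
  memSeq : List (A → V)
  status : T → Status A V
  beginIdx : T → ℕ
  rdSet : T → A → Option V
  wrSet : T → A → Option V

/-- External and internal actions of TMS2/TMS3. -/
inductive Action (T A V : Type) where
  | invBegin (t : T)  | respBegin (t : T)
  | invRead (t : T) (a : A) | respRead (t : T) (v : V)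
  | invWrite (t : T) (a : A) (v : V) | respWrite (t : T)
  | invCommit (t : T) | respCommit (t : T)
  | respAbort (t : T)
  | doRead (t : T) (a : A) (n : ℕ)
  | doWrite (t : T) (a : A) (v : V)
  | doCommitReadOnly (t : T) (n : ℕ)
  | doCommitWriter (t : T)
  deriving DecidableEq

/-- Is the action external (an invocation or a response)? -/
def Action.isExternal {T A V : Type} : Action T A V → Bool
  | .doRead _ _ _ => false
  | .doWrite _ _ _ => false
  | .doCommitReadOnly _ _ => false
  | .doCommitWriter _ => false
  | _ => true

variable {T A V : Type} [DecidableEq T] [DecidableEq A] [Zero V]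

/-- `memSeq(n)`. -/
def mems (s : State T A V) (n : ℕ) : A → V := s.memSeq.getD n (fun _ => (0 : V))

/-- The greatest index of `memSeq`. -/
def maxIdx (s : State T A V) : ℕ := s.memSeq.length - 1

/-- The most recent memory snapshot. -/
def latestMem (s : State T A V) : A → V := mems s (maxIdx s)

/-- `f ⊆ σ`: the memory `σ` agrees with the partial map `f` on its domain. -/
def Agrees (f : A → Option V) (σ : A → V) : Prop :=
  ∀ a v, f a = some v → σ a = v

/-- `validIdx_t(n)`. -/
def validIdx (s : State T A V) (t : T) (n : ℕ) : Prop :=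
  s.beginIdx t ≤ n ∧ n ≤ maxIdx s ∧ Agrees (s.rdSet t) (mems s n)

/-- Transitions of TMS2/TMS3, parametrised by the extra precondition `roPre`
of the internal read-only commit action: `roPre = validIdx` gives TMS2 and the
trivial `roPre` gives TMS3. -/
inductive Step (roPre : State T A V → T → ℕ → Prop) :
    State T A V → Action T A V → State T A V → Prop where
  | invBegin (s : State T A V) (t : T) : s.status t = .notStarted →
      Step roPre s (.invBegin t)
        { s with status := Function.update s.status t .beginPending,
                 beginIdx := Function.update s.beginIdx t (maxIdx s) }
  | respBegin (s : State T A V) (t : T) : s.status t = .beginPending →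
      Step roPre s (.respBegin t) { s with status := Function.update s.status t .ready }
  | invRead (s : State T A V) (t : T) (a : A) : s.status t = .ready →
      Step roPre s (.invRead t a) { s with status := Function.update s.status t (.doRead a) }
  | respRead (s : State T A V) (t : T) (v : V) : s.status t = .readResp v →
      Step roPre s (.respRead t v) { s with status := Function.update s.status t .ready }
  | invWrite (s : State T A V) (t : T) (a : A) (v : V) : s.status t = .ready →
      Step roPre s (.invWrite t a v)
        { s with status := Function.update s.status t (.doWrite a v) }
  | respWrite (s : State T A V) (t : T) : s.status t = .writeResp →
      Step roPre s (.respWrite t) { s with status := Function.update s.status t .ready }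
  | invCommit (s : State T A V) (t : T) : s.status t = .ready →
      Step roPre s (.invCommit t) { s with status := Function.update s.status t .doCommit }
  | respCommit (s : State T A V) (t : T) : s.status t = .commitResp →
      Step roPre s (.respCommit t) { s with status := Function.update s.status t .committed }
  | respAbort (s : State T A V) (t : T) :
      s.status t ∉ ([.notStarted, .ready, .commitResp, .committed, .aborted] :
        List (Status A V)) →
      Step roPre s (.respAbort t) { s with status := Function.update s.status t .aborted }
  | doReadLocal (s : State T A V) (t : T) (a : A) (n : ℕ) (v : V) :
      s.status t = .doRead a → s.wrSet t a = some v →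
      Step roPre s (.doRead t a n) { s with status := Function.update s.status t (.readResp v) }
  | doReadGlobal (s : State T A V) (t : T) (a : A) (n : ℕ) :
      s.status t = .doRead a → s.wrSet t a = none → validIdx s t n →
      Step roPre s (.doRead t a n)
        { s with status := Function.update s.status t (.readResp (mems s n a)),
                 rdSet := Function.update s.rdSet t
                            (Function.update (s.rdSet t) a (some (mems s n a))) }
  | doWrite (s : State T A V) (t : T) (a : A) (v : V) :
      s.status t = .doWrite a v →
      Step roPre s (.doWrite t a v)
        { s with status := Function.update s.status t .writeResp,
                 wrSet := Function.update s.wrSet t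
                            (Function.update (s.wrSet t) a (some v)) }
  | doCommitReadOnly (s : State T A V) (t : T) (n : ℕ) :
      s.status t = .doCommit → (∀ a, s.wrSet t a = none) → roPre s t n →
      Step roPre s (.doCommitReadOnly t n)
        { s with status := Function.update s.status t .commitResp }
  | doCommitWriter (s : State T A V) (t : T) :
      s.status t = .doCommit → Agrees (s.rdSet t) (latestMem s) →
      Step roPre s (.doCommitWriter t)
        { s with status := Function.update s.status t .commitResp,
                 memSeq := s.memSeq ++ [fun a => (s.wrSet t a).getD (latestMem s a)] }

/-- The TMS2 transition relation: the read-only commit requires a valid index. -/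
def TMS2Step : State T A V → Action T A V → State T A V → Prop :=
  Step (fun s t n => validIdx s t n)

/-- The TMS3 transition relation: the read-only commit has no valid-index
precondition. -/
def TMS3Step : State T A V → Action T A V → State T A V → Prop :=
  Step (fun _ _ _ => True)

/-- Initial states: one initial all-zero memory snapshot, all transactions not
started, empty read and write sets. -/
def Init (s : State T A V) : Prop :=
  s.memSeq = [fun _ => (0 : V)] ∧ s.status = (fun _ => Status.notStarted) ∧
  s.rdSet = (fun _ _ => none) ∧ s.wrSet = (fun _ _ => none)

/-- Executions of an automaton with transition relation `step`, carrying the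
trace of external actions performed so far. -/
inductive Exec (step : State T A V → Action T A V → State T A V → Prop) :
    State T A V → List (Action T A V) → Prop where
  | init (s : State T A V) : Init s → Exec step s []
  | ext (s : State T A V) (tr : List (Action T A V)) (a : Action T A V) (s' : State T A V) :
      Exec step s tr → step s a s' → a.isExternal = true → Exec step s' (tr ++ [a])
  | int (s : State T A V) (tr : List (Action T A V)) (a : Action T A V) (s' : State T A V) :
      Exec step s tr → step s a s' → a.isExternal = false → Exec step s' tr

/-- The traces (sequences of external actions) of an automaton. -/
def traces (step : State T A V → Action T A V → State T A V → Prop) :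
    Set (List (Action T A V)) :=
  { tr | ∃ s : State T A V, Exec step s tr }

/-- A state is reachable if it appears in some execution. -/
def Reachable (step : State T A V → Action T A V → State T A V → Prop)
    (s : State T A V) : Prop :=
  ∃ tr, Exec step s tr


variable {T A V : Type} [DecidableEq T] [DecidableEq A] [Zero V]

/-- Invariant: nonempty memory sequence; not-started transactions have empty
read sets; started transactions have a valid index. -/
def Inv (s : State T A V) : Prop :=
  s.memSeq ≠ [] ∧ ∀ t, (s.status t = .notStarted → ∀ a, s.rdSet t a = none) ∧
    (s.status t ≠ .notStarted → ∃ n, validIdx s t n)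

lemma validIdx_of_fields {s s' : State T A V} (hm : s'.memSeq = s.memSeq)
    (hb : s'.beginIdx = s.beginIdx) (hr : s'.rdSet = s.rdSet) (t : T) (n : ℕ) :
    validIdx s' t n ↔ validIdx s t n := by
  simp [validIdx, maxIdx, mems, hm, hb, hr]

lemma inv_of_fields {s s' : State T A V} (hm : s'.memSeq = s.memSeq)
    (hb : s'.beginIdx = s.beginIdx) (hr : s'.rdSet = s.rdSet)
    (hs : ∀ t', (s'.status t' = .notStarted → s.status t' = .notStarted) ∧
      (s'.status t' ≠ .notStarted → s.status t' ≠ .notStarted))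
    (hInv : Inv s) : Inv s' := by
  obtain ⟨hne, hI⟩ := hInv
  refine ⟨hm ▸ hne, fun t => ⟨fun h a => ?_, fun h => ?_⟩⟩
  · rw [hr]; exact (hI t).1 ((hs t).1 h) a
  · obtain ⟨n, hv⟩ := (hI t).2 ((hs t).2 h)
    exact ⟨n, (validIdx_of_fields hm hb hr t n).2 hv⟩

lemma mems_append (s : State T A V) (m : A → V) (n : ℕ) (hn : n < s.memSeq.length) :
    (({ s with memSeq := s.memSeq ++ [m] } : State T A V)).memSeq.getD n (fun _ => 0)
      = mems s n := by
  simp [mems, List.getD, List.getElem?_append_left hn]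

lemma inv_step {P : State T A V → T → ℕ → Prop} {s : State T A V}
    {a : Action T A V} {s' : State T A V}
    (hInv : Inv s) (h : Step P s a s') : Inv s' := by
  have hne := hInv.1
  cases h with
  | invBegin t h1 =>
      obtain ⟨hne, hI⟩ := hInv
      refine ⟨hne, fun t' => ?_⟩
      by_cases ht : t' = t
      · subst ht
        refine ⟨fun h => by simp [Function.update] at h, fun _ => ⟨maxIdx s, ?_⟩⟩
        refine ⟨by simp [maxIdx], le_refl _, fun a v hav => ?_⟩
        have := (hI t').1 h1 a
        simp only [] at hav
        rw [this] at hav; exact absurd hav (by simp)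
      · have h2 := hI t'
        simp only [Function.update_of_ne ht]
        refine ⟨h2.1, fun h => ?_⟩
        obtain ⟨n, hb, hmx, hag⟩ := h2.2 h
        exact ⟨n, by simpa [Function.update_of_ne ht] using hb, hmx, hag⟩
  | respBegin t h1 =>
      exact inv_of_fields (s := s) rfl rfl rfl (fun t' => by
        by_cases ht : t' = t
        · subst ht; simp [Function.update_self, h1]
        · simp [Function.update_of_ne ht]) hInv
  | invRead t a h1 =>
      exact inv_of_fields (s := s) rfl rfl rfl (fun t' => by
        by_cases ht : t' = t
        · subst ht; simp [Function.update_self, h1]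
        · simp [Function.update_of_ne ht]) hInv
  | respRead t v h1 =>
      exact inv_of_fields (s := s) rfl rfl rfl (fun t' => by
        by_cases ht : t' = t
        · subst ht; simp [Function.update_self, h1]
        · simp [Function.update_of_ne ht]) hInv
  | invWrite t a v h1 =>
      exact inv_of_fields (s := s) rfl rfl rfl (fun t' => by
        by_cases ht : t' = t
        · subst ht; simp [Function.update_self, h1]
        · simp [Function.update_of_ne ht]) hInv
  | respWrite t h1 =>
      exact inv_of_fields (s := s) rfl rfl rfl (fun t' => by
        by_cases ht : t' = t
        · subst ht; simp [Function.update_self, h1]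
        · simp [Function.update_of_ne ht]) hInv
  | invCommit t h1 =>
      exact inv_of_fields (s := s) rfl rfl rfl (fun t' => by
        by_cases ht : t' = t
        · subst ht; simp [Function.update_self, h1]
        · simp [Function.update_of_ne ht]) hInv
  | respCommit t h1 =>
      exact inv_of_fields (s := s) rfl rfl rfl (fun t' => by
        by_cases ht : t' = t
        · subst ht; simp [Function.update_self, h1]
        · simp [Function.update_of_ne ht]) hInv
  | respAbort t h1 =>
      exact inv_of_fields (s := s) rfl rfl rfl (fun t' => by
        by_cases ht : t' = t
        · subst ht
          simp only [List.mem_cons, List.mem_singleton] at h1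
          push_neg at h1
          simp [Function.update_self, h1.1]
        · simp [Function.update_of_ne ht]) hInv
  | doReadLocal t a n v h1 h2 =>
      exact inv_of_fields (s := s) rfl rfl rfl (fun t' => by
        by_cases ht : t' = t
        · subst ht; simp [Function.update_self, h1]
        · simp [Function.update_of_ne ht]) hInv
  | doWrite t a v h1 =>
      exact inv_of_fields (s := s) rfl rfl rfl (fun t' => by
        by_cases ht : t' = t
        · subst ht; simp [Function.update_self, h1]
        · simp [Function.update_of_ne ht]) hInv
  | doCommitReadOnly t n h1 h2 h3 =>
      exact inv_of_fields (s := s) rfl rfl rfl (fun t' => by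
        by_cases ht : t' = t
        · subst ht; simp [Function.update_self, h1]
        · simp [Function.update_of_ne ht]) hInv
  | doReadGlobal t a n h1 h2 h3 =>
      obtain ⟨hne, hI⟩ := hInv
      refine ⟨hne, fun t' => ?_⟩
      by_cases ht : t' = t
      · subst ht
        refine ⟨fun h => by simp [Function.update_self, h1] at h ⊢, fun _ => ⟨n, ?_⟩⟩
        obtain ⟨hb, hmx, hag⟩ := h3
        refine ⟨hb, hmx, fun a' v hav => ?_⟩
        simp only [Function.update_self] at hav
        by_cases ha : a' = a
        · subst ha; rw [Function.update_self] at hav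
          exact Option.some_inj.mp hav
        · rw [Function.update_of_ne ha] at hav
          exact hag a' v hav
      · have h2' := hI t'
        simp only [Function.update_of_ne ht]
        refine ⟨h2'.1, fun h => ?_⟩
        obtain ⟨n', hb, hmx, hag⟩ := h2'.2 h
        refine ⟨n', hb, hmx, fun a' v hav => ?_⟩
        simp only [Function.update_of_ne ht] at hav
        exact hag a' v hav
  | doCommitWriter t h1 h2 =>
      obtain ⟨hne, hI⟩ := hInv
      refine ⟨by simp, fun t' => ?_⟩
      have hlen : 0 < s.memSeq.length := List.length_pos_iff.mpr hne
      have hstat : ({ s with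
          status := Function.update s.status t Status.commitResp,
          memSeq := s.memSeq ++ [fun a => (s.wrSet t a).getD (latestMem s a)] } :
          State T A V).status t' = .notStarted → s.status t' = .notStarted := by
        by_cases ht : t' = t
        · subst ht; simp [Function.update_self]
        · simp [Function.update_of_ne ht]
      refine ⟨fun h a => (hI t').1 (hstat h) a, fun h => ?_⟩
      have hstat' : s.status t' ≠ .notStarted := by
        by_cases ht : t' = t
        · subst ht; rw [h1]; simp
        · simpa [Function.update_of_ne ht] using h
      obtain ⟨n, hb, hmx, hag⟩ := (hI t').2 hstat'
      refine ⟨n, hb, ?_, ?_⟩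
      · simp only [maxIdx] at hmx ⊢
        simp only [List.length_append, List.length_singleton]
        omega
      · intro a v hav
        have hn : n < s.memSeq.length := by
          simp only [maxIdx] at hmx; omega
        rw [show (mems ({ s with
            status := Function.update s.status t Status.commitResp,
            memSeq := s.memSeq ++ [fun a => (s.wrSet t a).getD (latestMem s a)] } :
            State T A V) n) = mems s n from ?_]
        · exact hag a v hav
        · simp [mems, List.getD, List.getElem?_append_left hn]

lemma step_mono {P Q : State T A V → T → ℕ → Prop}
    (hPQ : ∀ s t n, P s t n → Q s t n) {s : State T A V} {a : Action T A V}
    {s' : State T A V} (h : Step P s a s') : Step Q s a s' := by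
  cases h <;> constructor <;> solve_by_elim

lemma exec_inv {step : State T A V → Action T A V → State T A V → Prop}
    (hpres : ∀ s a s', Inv s → step s a s' → Inv s')
    {s : State T A V} {tr : List (Action T A V)} (h : Exec step s tr) : Inv s := by
  induction h with
  | init s hi =>
      obtain ⟨h1, h2, h3, h4⟩ := hi
      exact ⟨by simp [h1], fun t => ⟨fun _ a => by simp [h3], fun hn =>
        absurd (by simp [h2]) hn⟩⟩
  | ext s tr a s' h1 h2 h3 ih => exact hpres s a s' ih h2
  | int s tr a s' h1 h2 h3 ih => exact hpres s a s' ih h2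

lemma step3_to_2 {s s' : State T A V} {a : Action T A V} (hInv : Inv s)
    (h : TMS3Step s a s') :
    ∃ a' : Action T A V, TMS2Step s a' s' ∧ a'.isExternal = a.isExternal ∧
      (a.isExternal = true → a' = a) := by
  cases h with
  | doCommitReadOnly t n h1 h2 h3 =>
      obtain ⟨n', hv⟩ := (hInv.2 t).2 (by rw [h1]; simp)
      exact ⟨.doCommitReadOnly t n', Step.doCommitReadOnly _ t n' h1 h2 hv,
        rfl, by simp [Action.isExternal]⟩
  | invBegin t h1 => exact ⟨_, Step.invBegin _ t h1, rfl, fun _ => rfl⟩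
  | respBegin t h1 => exact ⟨_, Step.respBegin _ t h1, rfl, fun _ => rfl⟩
  | invRead t a h1 => exact ⟨_, Step.invRead _ t a h1, rfl, fun _ => rfl⟩
  | respRead t v h1 => exact ⟨_, Step.respRead _ t v h1, rfl, fun _ => rfl⟩
  | invWrite t a v h1 => exact ⟨_, Step.invWrite _ t a v h1, rfl, fun _ => rfl⟩
  | respWrite t h1 => exact ⟨_, Step.respWrite _ t h1, rfl, fun _ => rfl⟩
  | invCommit t h1 => exact ⟨_, Step.invCommit _ t h1, rfl, fun _ => rfl⟩
  | respCommit t h1 => exact ⟨_, Step.respCommit _ t h1, rfl, fun _ => rfl⟩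
  | respAbort t h1 => exact ⟨_, Step.respAbort _ t h1, rfl, fun _ => rfl⟩
  | doReadLocal t a n v h1 h2 =>
      exact ⟨_, Step.doReadLocal _ t a n v h1 h2, rfl, fun _ => rfl⟩
  | doReadGlobal t a n h1 h2 h3 =>
      exact ⟨_, Step.doReadGlobal _ t a n h1 h2 h3, rfl, fun _ => rfl⟩
  | doWrite t a v h1 => exact ⟨_, Step.doWrite _ t a v h1, rfl, fun _ => rfl⟩
  | doCommitWriter t h1 h2 =>
      exact ⟨_, Step.doCommitWriter _ t h1 h2, rfl, fun _ => rfl⟩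

lemma exec2_to_3 {s : State T A V} {tr : List (Action T A V)}
    (h : Exec TMS2Step s tr) : Exec TMS3Step s tr := by
  induction h with
  | init s hi => exact .init s hi
  | ext s tr a s' h1 h2 h3 ih =>
      exact .ext s tr a s' ih (step_mono (fun _ _ _ _ => trivial) h2) h3
  | int s tr a s' h1 h2 h3 ih =>
      exact .int s tr a s' ih (step_mono (fun _ _ _ _ => trivial) h2) h3

lemma exec3_to_2 {s : State T A V} {tr : List (Action T A V)}
    (h : Exec TMS3Step s tr) : Exec TMS2Step s tr := by
  induction h with
  | init s hi => exact .init s hi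
  | ext s tr a s' h1 h2 h3 ih =>
      have hInv : Inv s := exec_inv (fun s a s' hi hs => inv_step hi hs) h1
      obtain ⟨a', hstep, hext, heq⟩ := step3_to_2 hInv h2
      have ha := heq h3
      subst ha
      exact .ext s tr a' s' ih hstep h3
  | int s tr a s' h1 h2 h3 ih =>
      have hInv : Inv s := exec_inv (fun s a s' hi hs => inv_step hi hs) h1
      obtain ⟨a', hstep, hext, heq⟩ := step3_to_2 hInv h2
      exact .int s tr a' s' ih hstep (hext.trans h3)


end TMS

/-- TMS2 and TMS3 have exactly the same traces: TMS2 refines TMS3 and TMS3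
refines TMS2. -/
theorem tms2_equiv_tms3 {T A V : Type} [DecidableEq T] [DecidableEq A] [Zero V] :
    TMS.traces (TMS.TMS2Step (T := T) (A := A) (V := V)) ⊆ TMS.traces TMS.TMS3Step ∧
    TMS.traces (TMS.TMS3Step (T := T) (A := A) (V := V)) ⊆ TMS.traces TMS.TMS2Step := by
  constructor
  · rintro tr ⟨s, h⟩
    exact ⟨s, TMS.exec2_to_3 h⟩
  · rintro tr ⟨s, h⟩
    exact ⟨s, TMS.exec3_to_2 h⟩
end

section
/- If there exists a forward simulation R from a concrete IOA C to an abstract IOA A (where C and A have the same external actions), then C refines A, i.e., every trace of C is a trace of A. -/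
/-- An input/output automaton over state type `S` and action type `Act`:
the actions in `ext` are external, all other actions are internal. -/
structure IOA (S Act : Type) where
  start : Set S
  ext : Set Act
  trans : S → Act → S → Prop

namespace IOA

/-- Executions of an IOA, carrying the trace of external actions performed. -/
inductive Exec {S Act : Type} (M : IOA S Act) : S → List Act → Prop where
  | init (s : S) : s ∈ M.start → Exec M s []
  | extStep (s : S) (tr : List Act) (a : Act) (s' : S) :
      Exec M s tr → M.trans s a s' → a ∈ M.ext → Exec M s' (tr ++ [a])
  | intStep (s : S) (tr : List Act) (a : Act) (s' : S) :
      Exec M s tr → M.trans s a s' → a ∉ M.ext → Exec M s' tr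

/-- Reachable states. -/
def reach {S Act : Type} (M : IOA S Act) : Set S := { s | ∃ tr, Exec M s tr }

/-- Traces: sequences of external actions along executions. -/
def traces {S Act : Type} (M : IOA S Act) : Set (List Act) := { tr | ∃ s, Exec M s tr }

/-- Forward simulation from a concrete IOA `C` to an abstract IOA `A`. -/
def ForwardSim {SC SA Act : Type} (C : IOA SC Act) (A : IOA SA Act)
    (R : SC → SA → Prop) : Prop :=
  (∀ cs ∈ C.start, ∃ sa ∈ A.start, R cs sa) ∧
  (∀ cs ∈ reach C, ∀ sa ∈ reach A, ∀ a ∈ C.ext, ∀ cs',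
      R cs sa → C.trans cs a cs' →
      ∃ sa', R cs' sa' ∧ A.trans sa a sa') ∧
  (∀ cs ∈ reach C, ∀ sa ∈ reach A, ∀ a ∉ C.ext, ∀ cs',
      R cs sa → C.trans cs a cs' →
      (R cs' sa ∨ ∃ sa' a', a' ∉ A.ext ∧ R cs' sa' ∧ A.trans sa a' sa'))

end IOA

/-- Soundness of forward simulation: if there is a forward simulation from `C`
to `A` (with the same external actions), then every trace of `C` is a trace of
`A`, i.e. `C` refines `A`. -/
theorem forward_simulation_sound {SC SA Act : Type}
    (C : IOA SC Act) (A : IOA SA Act)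
    (hext : C.ext = A.ext)
    (hsim : ∃ R : SC → SA → Prop, IOA.ForwardSim C A R) :
    IOA.traces C ⊆ IOA.traces A := by
  obtain ⟨R, hinit, hextc, hintc⟩ := hsim
  have key : ∀ cs tr, IOA.Exec C cs tr → ∃ sa, IOA.Exec A sa tr ∧ R cs sa := by
    intro cs tr h
    induction h with
    | init s hs =>
        obtain ⟨sa, hsa, hR⟩ := hinit s hs
        exact ⟨sa, .init sa hsa, hR⟩
    | extStep s tr a s' hexec htr ha ih =>
        obtain ⟨sa, hae, hR⟩ := ih
        obtain ⟨sa', hR', htr'⟩ :=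
          hextc s ⟨tr, hexec⟩ sa ⟨tr, hae⟩ a ha s' hR htr
        exact ⟨sa', .extStep sa tr a sa' hae htr' (hext ▸ ha), hR'⟩
    | intStep s tr a s' hexec htr ha ih =>
        obtain ⟨sa, hae, hR⟩ := ih
        rcases hintc s ⟨tr, hexec⟩ sa ⟨tr, hae⟩ a ha s' hR htr with hR' | ⟨sa', a', ha', hR', htr'⟩
        · exact ⟨sa, hae, hR'⟩
        · exact ⟨sa', .intStep sa tr a' sa' hae htr' ha', hR'⟩
  rintro tr ⟨s, h⟩
  obtain ⟨sa, hae, -⟩ := key s tr h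
  exact ⟨sa, hae⟩
end

section
/- Let 0 and 1 be distinct transaction identifiers and x an address. The history h1 = ⟨TXBegin_0, ret(TXBegin)_0, TXWrite_0(x,0), TXBegin_1, ret(TXBegin)_1, TXWrite_1(x,0), ret(TXAbort)_1⟩ is a member of hist(TML-CGA), but is a member of neither hist(NORec-CGA) nor hist(RO-NORec-CGA). -/
namespace TM

/-- Per-transaction control state for TML-CGA. -/
inductive TmlPc (A V : Type) where
  | notStarted | beginPending | beginResp
  | ready
  | readPending (a : A) | readResp (v : V)
  | writePending (a : A) (v : V) | writeResp
  | commitPending | commitResp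
  | abortResp
  | committed | aborted

/-- State of TML-CGA. -/
structure TmlState (T A V : Type) where
  glb : ℕ
  loc : T → ℕ
  mem : A → V
  pc : T → TmlPc A V

variable {T A V : Type} [DecidableEq T] [DecidableEq A] [Zero V]

/-- Steps of TML-CGA: each operation emits its invocation event, later executes
its body in one atomic (silent) step, and finally emits its response event. -/
inductive TmlStep : TmlState T A V → Option (Event T A V) → TmlState T A V → Prop where
  | invBegin (s : TmlState T A V) (t : T) : s.pc t = .notStarted →
      TmlStep s (some (.invBegin t)) { s with pc := Function.update s.pc t .beginPending }
  | doBegin (s : TmlState T A V) (t : T) : s.pc t = .beginPending → Even s.glb →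
      TmlStep s none { s with loc := Function.update s.loc t s.glb,
                              pc := Function.update s.pc t .beginResp }
  | respBegin (s : TmlState T A V) (t : T) : s.pc t = .beginResp →
      TmlStep s (some (.respBegin t)) { s with pc := Function.update s.pc t .ready }
  | invRead (s : TmlState T A V) (t : T) (a : A) : s.pc t = .ready →
      TmlStep s (some (.invRead t a)) { s with pc := Function.update s.pc t (.readPending a) }
  | doReadOk (s : TmlState T A V) (t : T) (a : A) :
      s.pc t = .readPending a → s.glb = s.loc t →
      TmlStep s none { s with pc := Function.update s.pc t (.readResp (s.mem a)) }
  | doReadAbort (s : TmlState T A V) (t : T) (a : A) :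
      s.pc t = .readPending a → s.glb ≠ s.loc t →
      TmlStep s none { s with pc := Function.update s.pc t .abortResp }
  | respRead (s : TmlState T A V) (t : T) (v : V) : s.pc t = .readResp v →
      TmlStep s (some (.respRead t v)) { s with pc := Function.update s.pc t .ready }
  | invWrite (s : TmlState T A V) (t : T) (a : A) (v : V) : s.pc t = .ready →
      TmlStep s (some (.invWrite t a v))
        { s with pc := Function.update s.pc t (.writePending a v) }
  | doWriteAbort (s : TmlState T A V) (t : T) (a : A) (v : V) :
      s.pc t = .writePending a v → s.glb ≠ s.loc t →
      TmlStep s none { s with pc := Function.update s.pc t .abortResp }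
  | doWriteEven (s : TmlState T A V) (t : T) (a : A) (v : V) :
      s.pc t = .writePending a v → s.glb = s.loc t → Even (s.loc t) →
      TmlStep s none { s with glb := s.glb + 1,
                              loc := Function.update s.loc t (s.loc t + 1),
                              mem := Function.update s.mem a v,
                              pc := Function.update s.pc t .writeResp }
  | doWriteOdd (s : TmlState T A V) (t : T) (a : A) (v : V) :
      s.pc t = .writePending a v → s.glb = s.loc t → ¬ Even (s.loc t) →
      TmlStep s none { s with mem := Function.update s.mem a v,
                              pc := Function.update s.pc t .writeResp }
  | respWrite (s : TmlState T A V) (t : T) : s.pc t = .writeResp →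
      TmlStep s (some (.respWrite t)) { s with pc := Function.update s.pc t .ready }
  | invCommit (s : TmlState T A V) (t : T) : s.pc t = .ready →
      TmlStep s (some (.invCommit t)) { s with pc := Function.update s.pc t .commitPending }
  | doCommitOdd (s : TmlState T A V) (t : T) :
      s.pc t = .commitPending → ¬ Even (s.loc t) →
      TmlStep s none { s with glb := s.loc t + 1,
                              pc := Function.update s.pc t .commitResp }
  | doCommitEven (s : TmlState T A V) (t : T) :
      s.pc t = .commitPending → Even (s.loc t) →
      TmlStep s none { s with pc := Function.update s.pc t .commitResp }
  | respCommit (s : TmlState T A V) (t : T) : s.pc t = .commitResp →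
      TmlStep s (some (.respCommit t)) { s with pc := Function.update s.pc t .committed }
  | respAbort (s : TmlState T A V) (t : T) : s.pc t = .abortResp →
      TmlStep s (some (.respAbort t)) { s with pc := Function.update s.pc t .aborted }

/-- Initial states of TML-CGA: `glb = 0`, memory constantly `0`, all
transactions not started. -/
def TmlInit (s : TmlState T A V) : Prop :=
  s.glb = 0 ∧ s.mem = (fun _ => (0 : V)) ∧ s.pc = (fun _ => TmlPc.notStarted)

/-- Executions of TML-CGA, carrying the history of emitted events. -/
inductive TmlExec : TmlState T A V → List (Event T A V) → Prop where
  | init (s : TmlState T A V) : TmlInit s → TmlExec s []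
  | silent (s : TmlState T A V) (h : List (Event T A V)) (s' : TmlState T A V) :
      TmlExec s h → TmlStep s none s' → TmlExec s' h
  | emit (s : TmlState T A V) (h : List (Event T A V)) (e : Event T A V)
      (s' : TmlState T A V) :
      TmlExec s h → TmlStep s (some e) s' → TmlExec s' (h ++ [e])

end TM

/-- `hist(TML-CGA)`: the histories generated by executions of TML-CGA. -/
def TM.TmlHist (T A V : Type) [DecidableEq T] [DecidableEq A] [Zero V] :
    Set (List (TM.Event T A V)) :=
  { h | ∃ s : TM.TmlState T A V, TM.TmlExec s h }

namespace TM

/-- Per-transaction control state for NORec-CGA / RO-NORec-CGA. -/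
inductive NPc (A V : Type) where
  | notStarted | beginPending | beginResp
  | ready
  | readPending (a : A) | readResp (v : V)
  | writePending (a : A) (v : V) | writeResp
  | commitPending | commitResp
  | abortResp
  | committed | aborted

/-- State of NORec-CGA / RO-NORec-CGA. -/
structure NState (T A V : Type) where
  mem : A → V
  rdSet : T → A → Option V
  wrSet : T → A → Option V
  pc : T → NPc A V

/-- `f ⊆ σ`: the memory `σ` agrees with the partial map `f` on its domain. -/
def Agrees {A V : Type} (f : A → Option V) (σ : A → V) : Prop :=
  ∀ a v, f a = some v → σ a = v

variable {T A V : Type} [DecidableEq T] [DecidableEq A] [Zero V]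

/-- Steps of NORec-CGA (`ro = false`) and RO-NORec-CGA (`ro = true`): each
operation emits its invocation event, later executes its body in one atomic
(silent) step, and finally emits its response event.  The only difference
between the two systems is that in RO-NORec, a read of an address already in
the read set returns the read-set value without validation. -/
inductive NStep (ro : Bool) : NState T A V → Option (Event T A V) → NState T A V → Prop where
  | invBegin (s : NState T A V) (t : T) : s.pc t = .notStarted →
      NStep ro s (some (.invBegin t)) { s with pc := Function.update s.pc t .beginPending }
  | doBegin (s : NState T A V) (t : T) : s.pc t = .beginPending →
      NStep ro s none { s with pc := Function.update s.pc t .beginResp }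
  | respBegin (s : NState T A V) (t : T) : s.pc t = .beginResp →
      NStep ro s (some (.respBegin t)) { s with pc := Function.update s.pc t .ready }
  | invWrite (s : NState T A V) (t : T) (a : A) (v : V) : s.pc t = .ready →
      NStep ro s (some (.invWrite t a v))
        { s with pc := Function.update s.pc t (.writePending a v) }
  | doWrite (s : NState T A V) (t : T) (a : A) (v : V) :
      s.pc t = .writePending a v →
      NStep ro s none
        { s with wrSet := Function.update s.wrSet t (Function.update (s.wrSet t) a (some v)),
                 pc := Function.update s.pc t .writeResp }
  | respWrite (s : NState T A V) (t : T) : s.pc t = .writeResp →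
      NStep ro s (some (.respWrite t)) { s with pc := Function.update s.pc t .ready }
  | invRead (s : NState T A V) (t : T) (a : A) : s.pc t = .ready →
      NStep ro s (some (.invRead t a)) { s with pc := Function.update s.pc t (.readPending a) }
  | doReadWrSet (s : NState T A V) (t : T) (a : A) (v : V) :
      s.pc t = .readPending a → s.wrSet t a = some v →
      NStep ro s none { s with pc := Function.update s.pc t (.readResp v) }
  | doReadRdSet (s : NState T A V) (t : T) (a : A) (v : V) :
      ro = true → s.pc t = .readPending a → s.wrSet t a = none → s.rdSet t a = some v →
      NStep ro s none { s with pc := Function.update s.pc t (.readResp v) }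
  | doReadMem (s : NState T A V) (t : T) (a : A) :
      s.pc t = .readPending a → s.wrSet t a = none →
      (ro = true → s.rdSet t a = none) → Agrees (s.rdSet t) s.mem →
      NStep ro s none
        { s with rdSet := Function.update s.rdSet t
                            (Function.update (s.rdSet t) a (some (s.mem a))),
                 pc := Function.update s.pc t (.readResp (s.mem a)) }
  | doReadAbort (s : NState T A V) (t : T) (a : A) :
      s.pc t = .readPending a → s.wrSet t a = none →
      (ro = true → s.rdSet t a = none) → ¬ Agrees (s.rdSet t) s.mem →
      NStep ro s none { s with pc := Function.update s.pc t .abortResp }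
  | respRead (s : NState T A V) (t : T) (v : V) : s.pc t = .readResp v →
      NStep ro s (some (.respRead t v)) { s with pc := Function.update s.pc t .ready }
  | invCommit (s : NState T A V) (t : T) : s.pc t = .ready →
      NStep ro s (some (.invCommit t)) { s with pc := Function.update s.pc t .commitPending }
  | doCommitReadOnly (s : NState T A V) (t : T) :
      s.pc t = .commitPending → (∀ a, s.wrSet t a = none) →
      NStep ro s none { s with pc := Function.update s.pc t .commitResp }
  | doCommitWriter (s : NState T A V) (t : T) :
      s.pc t = .commitPending → (∃ a v, s.wrSet t a = some v) →
      Agrees (s.rdSet t) s.mem →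
      NStep ro s none { s with mem := fun a => (s.wrSet t a).getD (s.mem a),
                               pc := Function.update s.pc t .commitResp }
  | doCommitAbort (s : NState T A V) (t : T) :
      s.pc t = .commitPending → (∃ a v, s.wrSet t a = some v) →
      ¬ Agrees (s.rdSet t) s.mem →
      NStep ro s none { s with pc := Function.update s.pc t .abortResp }
  | respCommit (s : NState T A V) (t : T) : s.pc t = .commitResp →
      NStep ro s (some (.respCommit t)) { s with pc := Function.update s.pc t .committed }
  | respAbort (s : NState T A V) (t : T) : s.pc t = .abortResp →
      NStep ro s (some (.respAbort t)) { s with pc := Function.update s.pc t .aborted }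

/-- Initial states: memory constantly `0`, empty read/write sets, all
transactions not started. -/
def NInit (s : NState T A V) : Prop :=
  s.mem = (fun _ => (0 : V)) ∧ s.rdSet = (fun _ _ => none) ∧
  s.wrSet = (fun _ _ => none) ∧ s.pc = (fun _ => NPc.notStarted)

/-- Executions, carrying the history of emitted events. -/
inductive NExec (ro : Bool) : NState T A V → List (Event T A V) → Prop where
  | init (s : NState T A V) : NInit s → NExec ro s []
  | silent (s : NState T A V) (h : List (Event T A V)) (s' : NState T A V) :
      NExec ro s h → NStep ro s none s' → NExec ro s' h
  | emit (s : NState T A V) (h : List (Event T A V)) (e : Event T A V)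
      (s' : NState T A V) :
      NExec ro s h → NStep ro s (some e) s' → NExec ro s' (h ++ [e])

end TM

/-- `hist(NORec-CGA)`: histories generated by executions of NORec-CGA. -/
def TM.NorecHist (T A V : Type) [DecidableEq T] [DecidableEq A] [Zero V] :
    Set (List (TM.Event T A V)) :=
  { h | ∃ s : TM.NState T A V, TM.NExec false s h }

/-- `hist(RO-NORec-CGA)`: histories generated by executions of RO-NORec-CGA. -/
def TM.RoNorecHist (T A V : Type) [DecidableEq T] [DecidableEq A] [Zero V] :
    Set (List (TM.Event T A V)) :=
  { h | ∃ s : TM.NState T A V, TM.NExec true s h }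

namespace TM

/-- Auxiliary: "safe" control states for a transaction that has only ever
invoked begin/write operations. -/
def SafeN {A V : Type} : NPc A V → Prop
  | .notStarted => True
  | .beginPending => True
  | .beginResp => True
  | .ready => True
  | .writePending _ _ => True
  | .writeResp => True
  | _ => False

lemma safe_invariant {T A V : Type} [DecidableEq T] [DecidableEq A] [Zero V]
    (ro : Bool) (t1 : T) :
    ∀ (s : NState T A V) (h : List (Event T A V)), NExec ro s h →
      (∀ a, Event.invRead t1 a ∉ h) → (Event.invCommit t1 ∉ h) →
      SafeN (s.pc t1) := by
  intro s h hex
  induction hex with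
  | init s hi =>
      intro _ _
      rw [hi.2.2.2]
      trivial
  | silent s h s' _ hstep ih =>
      intro hr hc
      have hS := ih hr hc
      cases hstep with
      | doBegin t hpc =>
          simp only [Function.update_apply]
          split <;> [trivial; exact hS]
      | doWrite t a v hpc =>
          simp only [Function.update_apply]
          split <;> [trivial; exact hS]
      | doReadWrSet t a v hpc _ =>
          simp only [Function.update_apply]
          split
          · rename_i heq; subst heq; rw [hpc] at hS; exact hS.elim
          · exact hS
      | doReadRdSet t a v _ hpc _ _ =>
          simp only [Function.update_apply]
          split
          · rename_i heq; subst heq; rw [hpc] at hS; exact hS.elim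
          · exact hS
      | doReadMem t a hpc _ _ _ =>
          simp only [Function.update_apply]
          split
          · rename_i heq; subst heq; rw [hpc] at hS; exact hS.elim
          · exact hS
      | doReadAbort t a hpc _ _ _ =>
          simp only [Function.update_apply]
          split
          · rename_i heq; subst heq; rw [hpc] at hS; exact hS.elim
          · exact hS
      | doCommitReadOnly t hpc _ =>
          simp only [Function.update_apply]
          split
          · rename_i heq; subst heq; rw [hpc] at hS; exact hS.elim
          · exact hS
      | doCommitWriter t hpc _ _ =>
          simp only [Function.update_apply]
          split
          · rename_i heq; subst heq; rw [hpc] at hS; exact hS.elim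
          · exact hS
      | doCommitAbort t hpc _ _ =>
          simp only [Function.update_apply]
          split
          · rename_i heq; subst heq; rw [hpc] at hS; exact hS.elim
          · exact hS
  | emit s h e s' _ hstep ih =>
      intro hr hc
      have hr' : ∀ a, Event.invRead t1 a ∉ h := by
        intro a ha
        exact hr a (List.mem_append_left _ ha)
      have hc' : Event.invCommit t1 ∉ h := fun ha => hc (List.mem_append_left _ ha)
      have hS := ih hr' hc'
      cases hstep with
      | invBegin t hpc =>
          simp only [Function.update_apply]
          split <;> [trivial; exact hS]
      | respBegin t hpc =>
          simp only [Function.update_apply]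
          split <;> [trivial; exact hS]
      | invWrite t a v hpc =>
          simp only [Function.update_apply]
          split <;> [trivial; exact hS]
      | respWrite t hpc =>
          simp only [Function.update_apply]
          split <;> [trivial; exact hS]
      | invRead t a hpc =>
          simp only [Function.update_apply]
          split
          · rename_i heq; subst heq
            exact absurd (List.mem_append_right h (by simp)) (hr a)
          · exact hS
      | invCommit t hpc =>
          simp only [Function.update_apply]
          split
          · rename_i heq; subst heq
            exact absurd (List.mem_append_right h (by simp)) hc
          · exact hS
      | respRead t v hpc =>
          simp only [Function.update_apply]
          split
          · rename_i heq; subst heq; rw [hpc] at hS; exact hS.elim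
          · exact hS
      | respCommit t hpc =>
          simp only [Function.update_apply]
          split
          · rename_i heq; subst heq; rw [hpc] at hS; exact hS.elim
          · exact hS
      | respAbort t hpc =>
          simp only [Function.update_apply]
          split
          · rename_i heq; subst heq; rw [hpc] at hS; exact hS.elim
          · exact hS

lemma exec_snoc {T A V : Type} [DecidableEq T] [DecidableEq A] [Zero V]
    (ro : Bool) :
    ∀ (s : NState T A V) (h : List (Event T A V)), NExec ro s h →
      ∀ (h' : List (Event T A V)) (e : Event T A V), h = h' ++ [e] →
      ∃ s₀ s₁ : NState T A V, NExec ro s₀ h' ∧ NStep ro s₀ (some e) s₁ := by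
  intro s h hex
  induction hex with
  | init s hi =>
      intro h' e he
      exact absurd he.symm (by simp)
  | silent s h s' _ _ ih => exact ih
  | emit s h e s' hex hstep _ =>
      intro h' e' he
      obtain ⟨h1, h2⟩ := List.append_inj' he rfl
      obtain rfl : e = e' := by simpa using h2
      exact ⟨s, s', h1 ▸ hex, hstep⟩

lemma not_norec {T A V : Type} [DecidableEq T] [DecidableEq A] [Zero V]
    (t0 t1 : T) (x : A) (hne : t0 ≠ t1) (ro : Bool)
    (s : NState T A V)
    (hex : NExec ro s [.invBegin t0, .respBegin t0, .invWrite t0 x (0 : V),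
                 .invBegin t1, .respBegin t1, .invWrite t1 x (0 : V),
                 .respAbort t1]) : False := by
  obtain ⟨s₀, s₁, hex₀, hstep⟩ :=
    exec_snoc ro _ _ hex
      [.invBegin t0, .respBegin t0, .invWrite t0 x (0 : V),
       .invBegin t1, .respBegin t1, .invWrite t1 x (0 : V)]
      (.respAbort t1) rfl
  have hsafe : SafeN (s₀.pc t1) := by
    apply safe_invariant ro t1 s₀ _ hex₀
    · intro a; simp
    · simp
  cases hstep with
  | respAbort t hpc => rw [hpc] at hsafe; exact hsafe

end TM

/-- The history `h1` is a history of TML-CGA but of neither NORec-CGA nor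
RO-NORec-CGA. -/
theorem h1_separates {T A V : Type}
    [DecidableEq T] [DecidableEq A] [Zero V]
    (t0 t1 : T) (x : A) (hne : t0 ≠ t1)
    (h1 : List (TM.Event T A V))
    (hh1 : h1 = [.invBegin t0, .respBegin t0, .invWrite t0 x (0 : V),
                 .invBegin t1, .respBegin t1, .invWrite t1 x (0 : V),
                 .respAbort t1]) :
    h1 ∈ TM.TmlHist T A V ∧ h1 ∉ TM.NorecHist T A V ∧ h1 ∉ TM.RoNorecHist T A V := by
  subst hh1
  have hne' : t1 ≠ t0 := Ne.symm hne
  refine ⟨?_, ?_, ?_⟩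
  · -- membership in hist(TML-CGA)
    have e0 : TM.TmlExec
        (⟨0, fun _ => 0, fun _ => (0 : V), fun _ => .notStarted⟩ : TM.TmlState T A V)
        [] := .init _ ⟨rfl, rfl, rfl⟩
    have e1 := TM.TmlExec.emit _ _ _ _ e0 (TM.TmlStep.invBegin _ t0 rfl)
    have e2 := TM.TmlExec.silent _ _ _ e1
      (TM.TmlStep.doBegin _ t0 (by simp) (by exact Even.zero))
    have e3 := TM.TmlExec.emit _ _ _ _ e2 (TM.TmlStep.respBegin _ t0 (by simp))
    have e4 := TM.TmlExec.emit _ _ _ _ e3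
      (TM.TmlStep.invWrite _ t0 x (0 : V) (by simp))
    have e5 := TM.TmlExec.emit _ _ _ _ e4
      (TM.TmlStep.invBegin _ t1 (by simp [Function.update_apply, hne']))
    have e6 := TM.TmlExec.silent _ _ _ e5
      (TM.TmlStep.doBegin _ t1 (by simp) (by exact Even.zero))
    have e7 := TM.TmlExec.emit _ _ _ _ e6 (TM.TmlStep.respBegin _ t1 (by simp))
    have e8 := TM.TmlExec.silent _ _ _ e7
      (TM.TmlStep.doWriteEven _ t0 x (0 : V)
        (by simp [Function.update_apply, hne])
        (by simp [Function.update_apply, hne])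
        (by simp [Function.update_apply, hne]))
    have e9 := TM.TmlExec.emit _ _ _ _ e8
      (TM.TmlStep.invWrite _ t1 x (0 : V) (by simp [Function.update_apply, hne']))
    have e10 := TM.TmlExec.silent _ _ _ e9
      (TM.TmlStep.doWriteAbort _ t1 x (0 : V) (by simp)
        (by simp [Function.update_apply, hne']))
    have e11 := TM.TmlExec.emit _ _ _ _ e10 (TM.TmlStep.respAbort _ t1 (by simp))
    exact ⟨_, by simpa using e11⟩
  · rintro ⟨s, hex⟩
    exact TM.not_norec t0 t1 x hne false s hex
  · rintro ⟨s, hex⟩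
    exact TM.not_norec t0 t1 x hne true s hex
end

section
/- Let 0 and 1 be distinct transaction identifiers and x an address. The history h2 = ⟨TXBegin_0, ret(TXBegin)_0, TXWrite_0(x,0), ret(TXWrite)_0, TXBegin_1, ret(TXBegin)_1⟩ is a member of both hist(NORec-CGA) and hist(RO-NORec-CGA), but is not a member of hist(TML-CGA). -/
namespace TM
variable {T A V : Type} [DecidableEq T] [DecidableEq A] [Zero V]

lemma norec_h2_aux (ro : Bool) (t0 t1 : T) (x : A) (hne : t0 ≠ t1) :
    ∃ s : NState T A V, NExec ro s
      [.invBegin t0, .respBegin t0, .invWrite t0 x (0 : V),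
       .respWrite t0, .invBegin t1, .respBegin t1] := by
  have hne' : t1 ≠ t0 := hne.symm
  set σ0 : NState T A V :=
    ⟨fun _ => 0, fun _ _ => none, fun _ _ => none, fun _ => .notStarted⟩ with hσ0
  have h0 : NExec ro σ0 [] := .init _ ⟨rfl, rfl, rfl, rfl⟩
  set σ1 := { σ0 with pc := Function.update σ0.pc t0 .beginPending } with hσ1
  have h1 : NExec ro σ1 [.invBegin t0] :=
    .emit _ _ _ _ h0 (.invBegin _ t0 rfl)
  set σ2 := { σ1 with pc := Function.update σ1.pc t0 .beginResp } with hσ2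
  have h2 : NExec ro σ2 [.invBegin t0] :=
    .silent _ _ _ h1 (.doBegin _ t0 (by simp [hσ1]))
  set σ3 := { σ2 with pc := Function.update σ2.pc t0 .ready } with hσ3
  have h3 : NExec ro σ3 [.invBegin t0, .respBegin t0] :=
    .emit _ _ _ _ h2 (.respBegin _ t0 (by simp [hσ2]))
  set σ4 := { σ3 with pc := Function.update σ3.pc t0 (.writePending x (0:V)) } with hσ4
  have h4 : NExec ro σ4 [.invBegin t0, .respBegin t0, .invWrite t0 x (0:V)] :=
    .emit _ _ _ _ h3 (.invWrite _ t0 x 0 (by simp [hσ3]))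
  set σ5 := { σ4 with
      wrSet := Function.update σ4.wrSet t0 (Function.update (σ4.wrSet t0) x (some (0:V))),
      pc := Function.update σ4.pc t0 .writeResp } with hσ5
  have h5 : NExec ro σ5 [.invBegin t0, .respBegin t0, .invWrite t0 x (0:V)] :=
    .silent _ _ _ h4 (.doWrite _ t0 x 0 (by simp [hσ4]))
  set σ6 := { σ5 with pc := Function.update σ5.pc t0 .ready } with hσ6
  have h6 : NExec ro σ6 [.invBegin t0, .respBegin t0, .invWrite t0 x (0:V), .respWrite t0] :=
    .emit _ _ _ _ h5 (.respWrite _ t0 (by simp [hσ5]))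
  set σ7 := { σ6 with pc := Function.update σ6.pc t1 .beginPending } with hσ7
  have h7 : NExec ro σ7 [.invBegin t0, .respBegin t0, .invWrite t0 x (0:V), .respWrite t0,
      .invBegin t1] :=
    .emit _ _ _ _ h6 (.invBegin _ t1
      (by simp [hσ6, hσ5, hσ4, hσ3, hσ2, hσ1, hσ0, Function.update_of_ne hne']))
  set σ8 := { σ7 with pc := Function.update σ7.pc t1 .beginResp } with hσ8
  have h8 : NExec ro σ8 [.invBegin t0, .respBegin t0, .invWrite t0 x (0:V), .respWrite t0,
      .invBegin t1] :=
    .silent _ _ _ h7 (.doBegin _ t1 (by simp [hσ7]))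
  exact ⟨_, .emit _ _ _ _ h8 (.respBegin _ t1 (by simp [hσ8]))⟩

end TM

namespace TM
variable {T A V : Type} [DecidableEq T] [DecidableEq A] [Zero V]

lemma snoc_eq {α : Type*} {h : List α} {e : α} (l : List α) (b : α)
    (hh : h ++ [e] = l ++ [b]) : h = l ∧ e = b :=
  ⟨(List.append_inj' hh rfl).1, by simpa using (List.append_inj' hh rfl).2⟩

/-- Invariant characterising the states reachable along prefixes of `h2`. -/
def TmlInv (t0 t1 : T) (x : A) (h : List (Event T A V)) (s : TmlState T A V) : Prop :=
  (h = [] → s.glb = 0 ∧ ∀ t, s.pc t = .notStarted) ∧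
  (h = [.invBegin t0] → s.glb = 0 ∧ (∀ t, t ≠ t0 → s.pc t = .notStarted) ∧
    (s.pc t0 = .beginPending ∨ (s.pc t0 = .beginResp ∧ s.loc t0 = 0))) ∧
  (h = [.invBegin t0, .respBegin t0] →
    s.glb = 0 ∧ (∀ t, t ≠ t0 → s.pc t = .notStarted) ∧ s.pc t0 = .ready ∧ s.loc t0 = 0) ∧
  (h = [.invBegin t0, .respBegin t0, .invWrite t0 x (0:V)] →
    (∀ t, t ≠ t0 → s.pc t = .notStarted) ∧
    ((s.glb = 0 ∧ s.pc t0 = .writePending x 0 ∧ s.loc t0 = 0) ∨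
     (s.glb = 1 ∧ s.pc t0 = .writeResp))) ∧
  (h = [.invBegin t0, .respBegin t0, .invWrite t0 x (0:V), .respWrite t0] →
    (∀ t, t ≠ t0 → s.pc t = .notStarted) ∧ s.glb = 1 ∧ s.pc t0 = .ready) ∧
  (h = [.invBegin t0, .respBegin t0, .invWrite t0 x (0:V), .respWrite t0, .invBegin t1] →
    (∀ t, t ≠ t0 → t ≠ t1 → s.pc t = .notStarted) ∧
    s.glb = 1 ∧ s.pc t0 = .ready ∧ s.pc t1 = .beginPending) ∧
  h ≠ [.invBegin t0, .respBegin t0, .invWrite t0 x (0:V), .respWrite t0, .invBegin t1,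
       .respBegin t1]

lemma tml_inv_holds (t0 t1 : T) (x : A) (hne : t0 ≠ t1) {s : TmlState T A V}
    {h : List (Event T A V)} (hx : TmlExec s h) : TmlInv t0 t1 x h s := by
  induction hx with
  | init s hs =>
      obtain ⟨hg, hm, hp⟩ := hs
      refine ⟨fun _ => ⟨hg, fun t => by rw [hp]⟩, ?_, ?_, ?_, ?_, ?_, ?_⟩ <;> simp
  | silent s h s' hx step ih =>
      obtain ⟨ih0, ih1, ih2, ih3, ih4, ih5, ihne⟩ := ih
      refine ⟨?_, ?_, ?_, ?_, ?_, ?_, ihne⟩ <;> intro hh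
      · obtain ⟨hg, hpc⟩ := ih0 hh
        clear ih0 ih1 ih2 ih3 ih4 ih5 ihne hx hh
        cases step <;> simp_all
      · obtain ⟨hg, hoth, hcase⟩ := ih1 hh
        clear ih0 ih1 ih2 ih3 ih4 ih5 ihne hx hh
        rcases hcase with hc | ⟨hc, hl⟩ <;>
        cases step <;> rename T => t <;>
          rcases eq_or_ne t t0 with rfl | ht <;>
          simp_all [Function.update_apply]
      · obtain ⟨hg, hoth, hrd, hl⟩ := ih2 hh
        clear ih0 ih1 ih2 ih3 ih4 ih5 ihne hx hh
        cases step <;> rename T => t <;>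
          rcases eq_or_ne t t0 with rfl | ht <;> simp_all [Function.update_apply]
      · obtain ⟨hoth, hcase⟩ := ih3 hh
        clear ih0 ih1 ih2 ih3 ih4 ih5 ihne hx hh
        rcases hcase with ⟨hg, hc, hl⟩ | ⟨hg, hc⟩ <;>
        cases step <;> rename T => t <;>
          rcases eq_or_ne t t0 with rfl | ht <;>
          simp_all [Function.update_apply]
      · obtain ⟨hoth, hg, hrd⟩ := ih4 hh
        clear ih0 ih1 ih2 ih3 ih4 ih5 ihne hx hh
        cases step <;> rename T => t <;>
          rcases eq_or_ne t t0 with rfl | ht <;> simp_all [Function.update_apply]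
      · obtain ⟨hoth, hg, hr0, hp1⟩ := ih5 hh
        clear ih0 ih1 ih2 ih3 ih4 ih5 ihne hx hh
        cases step <;> rename T => t <;>
          rcases eq_or_ne t t0 with rfl | ht <;>
          rcases eq_or_ne t t1 with rfl | ht1 <;>
          simp_all [Function.update_apply]
  | emit s h e s' hx step ih =>
      obtain ⟨ih0, ih1, ih2, ih3, ih4, ih5, ihne⟩ := ih
      refine ⟨?_, ?_, ?_, ?_, ?_, ?_, ?_⟩ <;> intro hh
      · simp at hh
      · obtain ⟨rfl, rfl⟩ := snoc_eq [] (Event.invBegin t0) hh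
        obtain ⟨hg, hpc⟩ := ih0 rfl
        cases step <;> simp_all [Function.update_apply]
      · obtain ⟨rfl, rfl⟩ := snoc_eq [Event.invBegin t0] (Event.respBegin t0) hh
        obtain ⟨hg, hoth, hcase⟩ := ih1 rfl
        cases step <;> rename T => t <;> simp_all [Function.update_apply]
      · obtain ⟨rfl, rfl⟩ := snoc_eq [Event.invBegin t0, Event.respBegin t0]
          (Event.invWrite t0 x (0:V)) hh
        obtain ⟨hg, hoth, hrd, hl⟩ := ih2 rfl
        cases step <;> rename T => t <;> simp_all [Function.update_apply]
      · obtain ⟨rfl, rfl⟩ := snoc_eq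
          [Event.invBegin t0, Event.respBegin t0, Event.invWrite t0 x (0:V)]
          (Event.respWrite t0) hh
        obtain ⟨hoth, hcase⟩ := ih3 rfl
        cases step <;> rename T => t <;> simp_all [Function.update_apply]
      · obtain ⟨rfl, rfl⟩ := snoc_eq
          [Event.invBegin t0, Event.respBegin t0, Event.invWrite t0 x (0:V),
           Event.respWrite t0] (Event.invBegin t1) hh
        obtain ⟨hoth, hg, hrd⟩ := ih4 rfl
        cases step <;> rename T => t <;> simp_all [Function.update_apply]
      · obtain ⟨rfl, rfl⟩ := snoc_eq
          [Event.invBegin t0, Event.respBegin t0, Event.invWrite t0 x (0:V),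
           Event.respWrite t0, Event.invBegin t1] (Event.respBegin t1) hh
        obtain ⟨hoth, hg, hr0, hp1⟩ := ih5 rfl
        cases step <;> rename T => t <;> simp_all [Function.update_apply]

end TM

/-- The history `h2` is a history of both NORec-CGA and RO-NORec-CGA but not
of TML-CGA. -/
theorem h2_separates {T A V : Type}
    [DecidableEq T] [DecidableEq A] [Zero V]
    (t0 t1 : T) (x : A) (hne : t0 ≠ t1)
    (h2 : List (TM.Event T A V))
    (hh2 : h2 = [.invBegin t0, .respBegin t0, .invWrite t0 x (0 : V),
                 .respWrite t0, .invBegin t1, .respBegin t1]) :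
    h2 ∈ TM.NorecHist T A V ∧ h2 ∈ TM.RoNorecHist T A V ∧ h2 ∉ TM.TmlHist T A V := by
  subst hh2
  refine ⟨TM.norec_h2_aux false t0 t1 x hne, TM.norec_h2_aux true t0 t1 x hne, ?_⟩
  rintro ⟨s, hs⟩
  exact (TM.tml_inv_holds t0 t1 x hne hs).2.2.2.2.2.2 rfl
end

section
/- Let 0 and 1 be distinct transaction identifiers, x an address, and 0, 1 distinct values. The history h3 = ⟨TXBegin_0, ret(TXBegin)_0, TXWrite_0(x,1), ret(TXWrite)_0, TXCommit_0, TXBegin_1, ret(TXBegin)_1, TXRead_1(x), ret(TXRead)_1(0), TXRead_1(x), ret(TXAbort)_1⟩ (in which the commit of transaction 0 remains pending) is a member of hist(NORec-CGA) but not a member of hist(RO-NORec-CGA). -/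
namespace TM

variable {T A V : Type} [DecidableEq T] [DecidableEq A] [Zero V]

/-- Invariant on the `t1`-components of the state after a prefix of length `n`
of `h3` in RO-NORec. -/
def Inv' (x : A) (pc : NPc A V) (rd : A → Option V) : ℕ → Prop
  | 0 | 1 | 2 | 3 | 4 | 5 =>
      pc = .notStarted ∧ (∀ a, rd a = none)
  | 6 => (pc = .beginPending ∨ pc = .beginResp) ∧ (∀ a, rd a = none)
  | 7 => pc = .ready ∧ (∀ a, rd a = none)
  | 8 => (pc = .readPending x ∧ (∀ a, rd a = none)) ∨
         ((∃ v, pc = .readResp v) ∧ ∃ w, rd x = some w)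
  | 9 => pc = .ready ∧ ∃ w, rd x = some w
  | 10 => (pc = .readPending x ∨ ∃ v, pc = .readResp v) ∧ ∃ w, rd x = some w
  | _ => False

def Inv (t1 : T) (x : A) (n : ℕ) (s : NState T A V) : Prop :=
  Inv' x (s.pc t1) (s.rdSet t1) n ∧ (∀ a, s.wrSet t1 a = none)

lemma Inv_silent {t1 : T} {x : A} {n : ℕ} {s s' : NState T A V}
    (hI : Inv t1 x n s) (hs : NStep true s none s') : Inv t1 x n s' := by
  obtain ⟨h1, h2⟩ := hI
  cases hs with
  | doBegin t hpc =>
      by_cases ht : t = t1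
      · subst ht
        rcases n with _|_|_|_|_|_|_|_|_|_|_|n <;>
          simp_all [Inv, Inv', Function.update_self]
      · exact ⟨by simpa [Function.update_of_ne (Ne.symm ht)] using h1, h2⟩
  | doWrite t a v hpc =>
      by_cases ht : t = t1
      · subst ht
        rcases n with _|_|_|_|_|_|_|_|_|_|_|n <;>
          simp_all [Inv, Inv', Function.update_self]
      · exact ⟨by simpa [Function.update_of_ne (Ne.symm ht)] using h1,
          by simpa [Function.update_of_ne (Ne.symm ht)] using h2⟩
  | doReadWrSet t a v hpc hw =>
      by_cases ht : t = t1
      · subst ht; rw [h2 a] at hw; cases hw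
      · exact ⟨by simpa [Function.update_of_ne (Ne.symm ht)] using h1, h2⟩
  | doReadRdSet t a v hro hpc hw hrd =>
      by_cases ht : t = t1
      · subst ht
        rcases n with _|_|_|_|_|_|_|_|_|_|_|n <;>
          simp_all [Inv, Inv', Function.update_self]
      · exact ⟨by simpa [Function.update_of_ne (Ne.symm ht)] using h1, h2⟩
  | doReadMem t a hpc hw hro hAg =>
      by_cases ht : t = t1
      · subst ht
        rcases n with _|_|_|_|_|_|_|_|_|_|_|n <;>
          simp_all [Inv, Inv', Function.update_self]
      · exact ⟨by simpa [Function.update_of_ne (Ne.symm ht)] using h1, h2⟩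
  | doReadAbort t a hpc hw hro hAg =>
      by_cases ht : t = t1
      · subst ht
        rcases n with _|_|_|_|_|_|_|_|_|_|_|n <;>
          simp_all [Inv, Inv', Function.update_self, Agrees]
      · exact ⟨by simpa [Function.update_of_ne (Ne.symm ht)] using h1, h2⟩
  | doCommitReadOnly t hpc hw =>
      by_cases ht : t = t1
      · subst ht
        rcases n with _|_|_|_|_|_|_|_|_|_|_|n <;>
          simp_all [Inv, Inv', Function.update_self]
      · exact ⟨by simpa [Function.update_of_ne (Ne.symm ht)] using h1, h2⟩
  | doCommitWriter t hpc hw hAg =>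
      by_cases ht : t = t1
      · subst ht
        rcases n with _|_|_|_|_|_|_|_|_|_|_|n <;>
          simp_all [Inv, Inv', Function.update_self]
      · exact ⟨by simpa [Function.update_of_ne (Ne.symm ht)] using h1, h2⟩
  | doCommitAbort t hpc hw hAg =>
      by_cases ht : t = t1
      · subst ht
        rcases n with _|_|_|_|_|_|_|_|_|_|_|n <;>
          simp_all [Inv, Inv', Function.update_self]
      · exact ⟨by simpa [Function.update_of_ne (Ne.symm ht)] using h1, h2⟩

end TM

lemma getElem?_of_prefix {α : Type*} {h : List α} {e : α} {L : List α}
    (hp : h ++ [e] <+: L) : L[h.length]? = some e := by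
  obtain ⟨r, rfl⟩ := hp
  rw [List.append_assoc]
  rw [List.getElem?_append_right (le_refl _)]
  simp

namespace TM

lemma not_ro {T A V : Type} [DecidableEq T] [DecidableEq A] [Zero V]
    (t0 t1 : T) (x : A) (v1 : V) (hne : t0 ≠ t1) :
    ∀ (s : NState T A V) (h : List (Event T A V)), NExec true s h →
      h <+: ([.invBegin t0, .respBegin t0, .invWrite t0 x v1, .respWrite t0,
              .invCommit t0, .invBegin t1, .respBegin t1, .invRead t1 x,
              .respRead t1 (0 : V), .invRead t1 x, .respAbort t1] :
              List (Event T A V)) →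
      Inv t1 x h.length s := by
  intro s h hex
  induction hex with
  | init s hinit =>
      intro _
      obtain ⟨hm, hr, hw, hp⟩ := hinit
      exact ⟨by simp [Inv, Inv', hp, hr], by simp [hw]⟩
  | silent s h s' hex hstep IH =>
      intro hpre; exact Inv_silent (IH hpre) hstep
  | emit s h e s' hex hstep IH =>
      intro hpre
      have hpre' : h <+: _ := (h.prefix_append [e]).trans hpre
      have hI := IH hpre'
      have hget := getElem?_of_prefix hpre
      have hlen : h.length ≤ 10 := by
        have := hpre.length_le; simp at this; omega
      simp only [List.length_append, List.length_singleton]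
      obtain ⟨n, hn⟩ : ∃ n, h.length = n := ⟨_, rfl⟩
      rw [hn] at hI hget hlen ⊢
      interval_cases n <;>
        (simp only [List.getElem?_cons_zero, List.getElem?_cons_succ,
           Option.some.injEq] at hget
         subst hget
         cases hstep) <;>
      simp_all [Inv, Inv', Function.update_self, Function.update_of_ne,
        hne, Ne.symm hne]

end TM

/-- The history `h3` (in which the commit of transaction `t0` remains pending)
is a history of NORec-CGA but not of RO-NORec-CGA. -/
theorem h3_separates {T A V : Type}
    [DecidableEq T] [DecidableEq A] [Zero V]
    (t0 t1 : T) (x : A) (v1 : V) (hne : t0 ≠ t1) (hv : (0 : V) ≠ v1)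
    (h3 : List (TM.Event T A V))
    (hh3 : h3 = [.invBegin t0, .respBegin t0, .invWrite t0 x v1, .respWrite t0,
                 .invCommit t0, .invBegin t1, .respBegin t1, .invRead t1 x,
                 .respRead t1 (0 : V), .invRead t1 x, .respAbort t1]) :
    h3 ∈ TM.NorecHist T A V ∧ h3 ∉ TM.RoNorecHist T A V := by
  subst hh3
  constructor
  · have e0 : TM.NExec false
        (⟨fun _ => (0:V), fun _ _ => none, fun _ _ => none, fun _ => .notStarted⟩ :
          TM.NState T A V) [] := .init _ ⟨rfl, rfl, rfl, rfl⟩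
    have e1 := TM.NExec.emit _ _ _ _ e0 (.invBegin _ t0 rfl)
    have e2 := TM.NExec.silent _ _ _ e1
      (.doBegin _ t0 (by simp [Function.update, hne, Ne.symm hne]))
    have e3 := TM.NExec.emit _ _ _ _ e2
      (.respBegin _ t0 (by simp [Function.update, hne, Ne.symm hne]))
    have e4 := TM.NExec.emit _ _ _ _ e3
      (.invWrite _ t0 x v1 (by simp [Function.update, hne, Ne.symm hne]))
    have e5 := TM.NExec.silent _ _ _ e4
      (.doWrite _ t0 x v1 (by simp [Function.update, hne, Ne.symm hne]))
    have e6 := TM.NExec.emit _ _ _ _ e5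
      (.respWrite _ t0 (by simp [Function.update, hne, Ne.symm hne]))
    have e7 := TM.NExec.emit _ _ _ _ e6
      (.invCommit _ t0 (by simp [Function.update, hne, Ne.symm hne]))
    have e8 := TM.NExec.emit _ _ _ _ e7
      (.invBegin _ t1 (by simp [Function.update, hne, Ne.symm hne]))
    have e9 := TM.NExec.silent _ _ _ e8
      (.doBegin _ t1 (by simp [Function.update, hne, Ne.symm hne]))
    have e10 := TM.NExec.emit _ _ _ _ e9
      (.respBegin _ t1 (by simp [Function.update, hne, Ne.symm hne]))
    have e11 := TM.NExec.emit _ _ _ _ e10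
      (.invRead _ t1 x (by simp [Function.update, hne, Ne.symm hne]))
    have e12 := TM.NExec.silent _ _ _ e11
      (.doReadMem _ t1 x (by simp [Function.update, hne, Ne.symm hne])
        (by simp [Function.update, hne, Ne.symm hne]) (by simp)
        (by intro a v hv'; simp [Function.update, hne, Ne.symm hne] at hv'))
    have e13 := TM.NExec.emit _ _ _ _ e12
      (.respRead _ t1 (0:V) (by simp [Function.update, hne, Ne.symm hne]))
    have e14 := TM.NExec.emit _ _ _ _ e13
      (.invRead _ t1 x (by simp [Function.update, hne, Ne.symm hne]))
    have e15 := TM.NExec.silent _ _ _ e14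
      (.doCommitWriter _ t0 (by simp [Function.update, hne, Ne.symm hne])
        ⟨x, v1, by simp [Function.update, hne, Ne.symm hne]⟩
        (by intro a v hv'; simp [Function.update, hne, Ne.symm hne] at hv'))
    have e16 := TM.NExec.silent _ _ _ e15
      (.doReadAbort _ t1 x (by simp [Function.update, hne, Ne.symm hne])
        (by simp [Function.update, hne, Ne.symm hne]) (by simp)
        (by
          intro hA
          have h := hA x 0 (by simp [Function.update, hne, Ne.symm hne])
          simp [Function.update, hne, Ne.symm hne] at h
          exact hv h.symm))
    have e17 := TM.NExec.emit _ _ _ _ e16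
      (.respAbort _ t1 (by simp [Function.update, hne, Ne.symm hne]))
    exact ⟨_, by simpa using e17⟩
  · rintro ⟨s, hex⟩
    have hI := TM.not_ro t0 t1 x v1 hne s _ hex (List.prefix_refl _)
    simp [TM.Inv, TM.Inv'] at hI
end

section
/- Let 0 and 1 be distinct transaction identifiers, x an address, and 0, 1 distinct values. The history h4 = ⟨TXBegin_0, ret(TXBegin)_0, TXWrite_0(x,1), ret(TXWrite)_0, TXCommit_0, TXBegin_1, ret(TXBegin)_1, TXRead_1(x), ret(TXCommit)_0, ret(TXRead)_1(0), TXRead_1(x), ret(TXRead)_1(0)⟩ is a member of hist(RO-NORec-CGA) but not a member of hist(NORec-CGA). -/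
/-!
In NORec-CGA a read of an address not in the write set is always served from memory, after
validating the read set. Once `respCommit t0` has been emitted, the commit of `t0` has executed;
it cannot abort (its read set is empty) and is not read-only, so it has set `x` to `v1`, and no
other transaction ever writes. Hence the second read of `t1` returns `v1` or aborts, and cannot
return `0`. RO-NORec-CGA instead answers the second read from the read set, where the first read,
executed before the commit of `t0`, recorded `0`.
-/

namespace TM

variable {T A V : Type}

section Invariant

variable (t0 t1 : T) (x : A) (v1 : V)

def h4 [Zero V] : List (Event T A V) :=
  [.invBegin t0, .respBegin t0, .invWrite t0 x v1, .respWrite t0,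
   .invCommit t0, .invBegin t1, .respBegin t1, .invRead t1 x,
   .respCommit t0, .respRead t1 0, .invRead t1 x, .respRead t1 0]

def Confined (s : NState T A V) : Prop :=
  (∀ t, t ≠ t0 → t ≠ t1 → s.pc t = .notStarted) ∧
  (∀ a, s.wrSet t1 a = none) ∧ (∀ a, s.rdSet t0 a = none)

/-- The control state of `t0`, and what is known of `wrSet t0` and `mem`, once the first `n` events
of `h4` have been emitted. -/
def writerPhase : ℕ → NState T A V → Prop
  | 0, s => s.pc t0 = .notStarted
  | 1, s => s.pc t0 = .beginPending ∨ s.pc t0 = .beginResp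
  | 2, s => s.pc t0 = .ready
  | 3, s => s.pc t0 = .writePending x v1 ∨ s.pc t0 = .writeResp ∧ s.wrSet t0 x = some v1
  | 4, s => s.pc t0 = .ready ∧ s.wrSet t0 x = some v1
  | 5, s | 6, s | 7, s | 8, s =>
      s.pc t0 = .commitPending ∧ s.wrSet t0 x = some v1 ∨ s.pc t0 = .commitResp ∧ s.mem x = v1
  | _, s => s.pc t0 = .committed ∧ s.mem x = v1

/-- The control state of `t1` once the first `n` events of `h4` have been emitted; there is no
state after the twelfth. -/
def readerPhase : ℕ → NState T A V → Prop
  | 0, s | 1, s | 2, s | 3, s | 4, s | 5, s => s.pc t1 = .notStarted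
  | 6, s => s.pc t1 = .beginPending ∨ s.pc t1 = .beginResp
  | 7, s | 10, s => s.pc t1 = .ready
  | 8, s | 9, s =>
      s.pc t1 = .readPending x ∨ (∃ v, s.pc t1 = .readResp v) ∨ s.pc t1 = .abortResp
  | 11, s => s.pc t1 = .readPending x ∨ s.pc t1 = .readResp v1 ∨ s.pc t1 = .abortResp
  | _, _ => False

def NorecInv (n : ℕ) (s : NState T A V) : Prop :=
  Confined t0 t1 s ∧ writerPhase t0 x v1 n s ∧ readerPhase t1 x v1 n s

end Invariant

variable [Zero V] {t0 t1 : T} {x : A} {v1 : V}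

theorem norecInv_zero {s : NState T A V} (hs : NInit s) : NorecInv t0 t1 x v1 0 s := by
  obtain ⟨-, hrd, hwr, hpc⟩ := hs
  simp [NorecInv, Confined, writerPhase, readerPhase, hrd, hwr, hpc]

variable [DecidableEq T] [DecidableEq A]

theorem NorecInv.silent {n : ℕ} {s s' : NState T A V} (hne : t0 ≠ t1)
    (hI : NorecInv t0 t1 x v1 n s) (hst : NStep false s none s') :
    NorecInv t0 t1 x v1 n s' := by
  obtain ⟨⟨hidle, hwr1, hrd0⟩, hw, hr⟩ := hI
  cases hst <;> rename T => t <;>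
    rcases eq_or_ne t t0 with rfl | h0 <;> rcases eq_or_ne t t1 with rfl | h1 <;>
    first
    | exact absurd rfl hne
    | (have := hidle t h0 h1; simp_all)
    | (rcases n with _|_|_|_|_|_|_|_|_|_|_|_|n <;>
        simp_all [NorecInv, Confined, writerPhase, readerPhase, Agrees, ne_comm])

theorem NorecInv.emit {n : ℕ} {e : Event T A V} {s s' : NState T A V} (hne : t0 ≠ t1)
    (hv : (0 : V) ≠ v1) (hI : NorecInv t0 t1 x v1 n s) (he : (h4 t0 t1 x v1)[n]? = some e)
    (hst : NStep false s (some e) s') : NorecInv t0 t1 x v1 (n + 1) s' := by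
  obtain ⟨⟨hidle, hwr1, hrd0⟩, hw, hr⟩ := hI
  rcases n with _|_|_|_|_|_|_|_|_|_|_|_|n <;> simp [h4] at he <;> subst he <;> cases hst <;>
    simp_all [NorecInv, Confined, writerPhase, readerPhase, ne_comm]

theorem _root_.List.IsPrefix.of_append_singleton {α : Type*} {l h : List α} {e : α}
    (hp : h ++ [e] <+: l) : h <+: l ∧ l[h.length]? = some e := by
  obtain ⟨t, rfl⟩ := hp
  exact ⟨⟨[e] ++ t, by simp⟩, by simp⟩

theorem norecInv_of_exec (hne : t0 ≠ t1) (hv : (0 : V) ≠ v1) {s : NState T A V}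
    {h : List (Event T A V)} (hex : NExec false s h) (hpre : h <+: h4 t0 t1 x v1) :
    NorecInv t0 t1 x v1 h.length s := by
  induction hex with
  | init s hs => exact norecInv_zero hs
  | silent s h s' _ hst ih => exact (ih hpre).silent hne hst
  | emit s h e s' _ hst ih =>
    obtain ⟨hpre, he⟩ := hpre.of_append_singleton
    simpa using (ih hpre).emit hne hv he hst

theorem h4_not_mem_norecHist (hne : t0 ≠ t1) (hv : (0 : V) ≠ v1) :
    h4 t0 t1 x v1 ∉ NorecHist T A V := by
  rintro ⟨s, hex⟩
  exact (norecInv_of_exec hne hv hex List.prefix_rfl).2.2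

theorem h4_mem_roNorecHist (hne : t0 ≠ t1) : h4 t0 t1 x v1 ∈ RoNorecHist T A V := by
  have hex : NExec (T := T) (A := A) (V := V) true
      ⟨fun _ => 0, fun _ _ => none, fun _ _ => none, fun _ => .notStarted⟩ [] :=
    .init _ ⟨rfl, rfl, rfl, rfl⟩
  have hex := NExec.emit _ _ _ _ hex (.invBegin _ t0 rfl)
  have hex := NExec.silent _ _ _ hex (.doBegin _ t0 (by simp))
  have hex := NExec.emit _ _ _ _ hex (.respBegin _ t0 (by simp))
  have hex := NExec.emit _ _ _ _ hex (.invWrite _ t0 x v1 (by simp))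
  have hex := NExec.silent _ _ _ hex (.doWrite _ t0 x v1 (by simp))
  have hex := NExec.emit _ _ _ _ hex (.respWrite _ t0 (by simp))
  have hex := NExec.emit _ _ _ _ hex (.invCommit _ t0 (by simp))
  have hex := NExec.emit _ _ _ _ hex (.invBegin _ t1 (by simp [hne.symm]))
  have hex := NExec.silent _ _ _ hex (.doBegin _ t1 (by simp))
  have hex := NExec.emit _ _ _ _ hex (.respBegin _ t1 (by simp))
  have hex := NExec.emit _ _ _ _ hex (.invRead _ t1 x (by simp))
  -- the first read of `t1` executes before the commit of `t0`, recording `x ↦ 0`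
  have hex := NExec.silent _ _ _ hex (.doReadMem _ t1 x (by simp) (by simp [hne.symm])
    (fun _ => rfl) (fun _ _ h => by simp at h))
  have hex := NExec.silent _ _ _ hex (.doCommitWriter _ t0 (by simp [hne])
    ⟨x, v1, by simp⟩ (fun _ _ h => by simp [hne] at h))
  have hex := NExec.emit _ _ _ _ hex (.respCommit _ t0 (by simp))
  have hex := NExec.emit _ _ _ _ hex (.respRead _ t1 0 (by simp [hne.symm]))
  have hex := NExec.emit _ _ _ _ hex (.invRead _ t1 x (by simp))
  have hex := NExec.silent _ _ _ hex (.doReadRdSet _ t1 x 0 rfl (by simp)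
    (by simp [hne.symm]) (by simp))
  have hex := NExec.emit _ _ _ _ hex (.respRead _ t1 0 (by simp))
  exact ⟨_, hex⟩

end TM

/-- The history `h4` is a history of RO-NORec-CGA but not of NORec-CGA. -/
theorem h4_separates {T A V : Type}
    [DecidableEq T] [DecidableEq A] [Zero V]
    (t0 t1 : T) (x : A) (v1 : V) (hne : t0 ≠ t1) (hv : (0 : V) ≠ v1)
    (h4 : List (TM.Event T A V))
    (hh4 : h4 = [.invBegin t0, .respBegin t0, .invWrite t0 x v1, .respWrite t0,
                 .invCommit t0, .invBegin t1, .respBegin t1, .invRead t1 x,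
                 .respCommit t0, .respRead t1 (0 : V), .invRead t1 x,
                 .respRead t1 (0 : V)]) :
    h4 ∈ TM.RoNorecHist T A V ∧ h4 ∉ TM.NorecHist T A V := by
  subst hh4
  exact ⟨TM.h4_mem_roNorecHist hne, TM.h4_not_mem_norecHist hne hv⟩
end
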